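/- arXiv:1010.3566 — 10 statements merged into one kernel-verified Lean document; each statement's English description precedes it below -/
import Mathlib

section
/- Let P be an n×m column-stochastic matrix (nonnegative with each column summing to 1). Then rk₊(P) equals the least integer t such that there exist t points Q₁,…,Q_t in the standard simplex Δⁿ⁻¹ = {x ∈ ℝⁿ : xᵢ ≥ 0, Σxᵢ = 1} whose convex hull contains every column of P. -/
open Matrix BigOperators Filter Topology

/-- The nonnegative rank: least `k` such that `P` is a sum of `k` nonnegative dyads. -/
noncomputable def nnRank {n m : ℕ} (P : Matrix (Fin n) (Fin m) ℝ) : ℕ :=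
  sInf {k : ℕ | ∃ (c : Fin k → Fin n → ℝ) (r : Fin k → Fin m → ℝ),
    (∀ h i, 0 ≤ c h i) ∧ (∀ h j, 0 ≤ r h j) ∧
    P = ∑ h, Matrix.vecMulVec (c h) (r h)}

/-- Frobenius distance between two matrices. -/
noncomputable def frobDist {n m : ℕ} (P N : Matrix (Fin n) (Fin m) ℝ) : ℝ :=
  Real.sqrt (∑ i, ∑ j, (P i j - N i j) ^ 2)

lemma mem_convexHull_range_iff_aux {k n : ℕ} (Q : Fin k → Fin n → ℝ) (x : Fin n → ℝ) :
    x ∈ convexHull ℝ (Set.range Q) ↔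
      ∃ w : Fin k → ℝ, (∀ h, 0 ≤ w h) ∧ ∑ h, w h = 1 ∧ ∑ h, w h • Q h = x := by
  constructor
  · intro hx
    rw [convexHull_range_eq_exists_affineCombination] at hx
    obtain ⟨s, w, hw0, hw1, hx⟩ := hx
    rw [Finset.affineCombination_eq_linear_combination s Q w hw1] at hx
    refine ⟨fun h => if h ∈ s then w h else 0, ?_, ?_, ?_⟩
    · intro h
      by_cases hs : h ∈ s <;> simp [hs]
      exact hw0 h hs
    · rw [Finset.sum_ite_mem, Finset.univ_inter, hw1]
    · have : ∀ h : Fin k, (if h ∈ s then w h else 0) • Q h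
          = if h ∈ s then w h • Q h else 0 := by
        intro h; by_cases hs : h ∈ s <;> simp [hs]
      simp_rw [this]
      rw [Finset.sum_ite_mem, Finset.univ_inter, hx]
  · rintro ⟨w, hw0, hw1, hx⟩
    exact mem_convexHull_of_exists_fintype w Q hw0 hw1 (fun h => Set.mem_range_self h) hx

theorem nnRank_eq_nested_polytopes {n m : ℕ} (P : Matrix (Fin n) (Fin m) ℝ)
    (hP : ∀ i j, 0 ≤ P i j) (hstoch : ∀ j, ∑ i, P i j = 1) :
    nnRank P =
      sInf {t : ℕ | ∃ Q : Fin t → (Fin n → ℝ),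
        (∀ h, (∀ i, 0 ≤ Q h i) ∧ ∑ i, Q h i = 1) ∧
        ∀ j, (fun i => P i j) ∈ convexHull ℝ (Set.range Q)} := by
  rcases Nat.eq_zero_or_pos m with hm | hm
  · subst hm
    have h1 : nnRank P = 0 := by
      apply Nat.sInf_eq_zero.mpr
      left
      refine ⟨fun h => 0, fun h => 0, fun h i => le_refl _, fun h j => le_refl _, ?_⟩
      ext i j
      exact j.elim0
    rw [h1]
    symm
    apply Nat.sInf_eq_zero.mpr
    left
    exact ⟨fun h => h.elim0, fun h => h.elim0, fun j => j.elim0⟩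
  · have hn : 0 < n := by
      rcases Nat.eq_zero_or_pos n with hn | hn
      · subst hn
        have := hstoch ⟨0, hm⟩
        simp at this
      · exact hn
    unfold nnRank
    congr 1
    ext k
    simp only [Set.mem_setOf_eq]
    constructor
    · rintro ⟨c, r, hc, hr, hPsum⟩
      have hPentry : ∀ i j, P i j = ∑ h, c h i * r h j := by
        intro i j
        rw [hPsum]
        simp [Matrix.sum_apply, Matrix.vecMulVec_apply]
      set s : Fin k → ℝ := fun h => ∑ i, c h i with hs
      have hs0 : ∀ h, 0 ≤ s h := fun h => Finset.sum_nonneg fun i _ => hc h i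
      set Q : Fin k → Fin n → ℝ := fun h =>
        if s h = 0 then (fun i => if i = ⟨0, hn⟩ then 1 else 0)
        else fun i => c h i / s h with hQ
      have hczero : ∀ h, s h = 0 → ∀ i, c h i = 0 := by
        intro h hsh i
        have := (Finset.sum_eq_zero_iff_of_nonneg (fun i _ => hc h i)).mp hsh
        exact this i (Finset.mem_univ i)
      refine ⟨Q, ?_, ?_⟩
      · intro h
        by_cases hsh : s h = 0
        · constructor
          · intro i
            simp only [hQ, hsh, if_true]
            by_cases hi : i = ⟨0, hn⟩ <;> simp [hi]
          · simp only [hQ, hsh, if_true]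
            simp
        · constructor
          · intro i
            simp only [hQ, hsh, if_false]
            exact div_nonneg (hc h i) (hs0 h)
          · simp only [hQ, hsh, if_false]
            rw [← Finset.sum_div]
            exact div_self hsh
      · intro j
        rw [mem_convexHull_range_iff_aux]
        refine ⟨fun h => s h * r h j, fun h => mul_nonneg (hs0 h) (hr h j), ?_, ?_⟩
        · have : ∀ h : Fin k, s h * r h j = ∑ i, c h i * r h j := by
            intro h; rw [hs, Finset.sum_mul]
          simp_rw [this]
          rw [Finset.sum_comm]
          simp_rw [← hPentry]
          exact hstoch j
        · funext i
          rw [Finset.sum_apply]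
          have : ∀ h : Fin k, ((s h * r h j) • Q h) i = c h i * r h j := by
            intro h
            by_cases hsh : s h = 0
            · simp [hQ, hsh, hczero h hsh i]
            · simp only [hQ, hsh, if_false, Pi.smul_apply, smul_eq_mul]
              field_simp
          simp_rw [this]
          exact (hPentry i j).symm
    · rintro ⟨Q, hQ, hcol⟩
      have hw : ∀ j, ∃ w : Fin k → ℝ, (∀ h, 0 ≤ w h) ∧ ∑ h, w h = 1 ∧
          ∑ h, w h • Q h = (fun i => P i j) := by
        intro j
        rw [← mem_convexHull_range_iff_aux]
        exact hcol j
      choose w hw0 hw1 hwx using hw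
      refine ⟨fun h => Q h, fun h j => w j h, fun h i => (hQ h).1 i, fun h j => hw0 j h, ?_⟩
      ext i j
      have := congrFun (hwx j) i
      rw [Finset.sum_apply] at this
      simp only [Pi.smul_apply, smul_eq_mul] at this
      rw [Matrix.sum_apply]
      simp only [Matrix.vecMulVec_apply]
      rw [← this]
      apply Finset.sum_congr rfl
      intro h _
      ring
end

section
/- If P is an n×m column-stochastic matrix with rk₊(P) = k, then P can be written as P = Σ_{h=1}^k c_h·(r_h)ᵀ where each c_h ∈ ℝⁿ is nonnegative with ‖c_h‖₁ = 1 and each r_h ∈ ℝᵐ is nonnegative with Σ_h r_h^{(j)} = 1 for every column index j. -/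
open Matrix BigOperators Filter Topology

theorem stochastic_normalized_decomposition {n m : ℕ} (P : Matrix (Fin n) (Fin m) ℝ)
    (hP : ∀ i j, 0 ≤ P i j) (hstoch : ∀ j, ∑ i, P i j = 1)
    (k : ℕ) (hk : nnRank P = k) :
    ∃ (c : Fin k → Fin n → ℝ) (r : Fin k → Fin m → ℝ),
      (∀ h i, 0 ≤ c h i) ∧ (∀ h j, 0 ≤ r h j) ∧
      (∀ h, ∑ i, c h i = 1) ∧ (∀ j, ∑ h, r h j = 1) ∧
      P = ∑ h, Matrix.vecMulVec (c h) (r h) := by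
  set S := {k : ℕ | ∃ (c : Fin k → Fin n → ℝ) (r : Fin k → Fin m → ℝ),
    (∀ h i, 0 ≤ c h i) ∧ (∀ h j, 0 ≤ r h j) ∧
    P = ∑ h, Matrix.vecMulVec (c h) (r h)} with hS
  by_cases hn : n = 0
  · subst hn
    by_cases hm : m = 0
    · subst hm
      -- 0 ∈ S, so nnRank P = 0, so k = 0
      have h0 : (0 : ℕ) ∈ S := by
        refine ⟨Fin.elim0, Fin.elim0, fun h => h.elim0, fun h => h.elim0, ?_⟩
        funext i j; exact i.elim0
      have hk0 : k = 0 := by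
        have : nnRank P = 0 := Nat.le_zero.mp (Nat.sInf_le h0)
        omega
      subst hk0
      refine ⟨fun h => h.elim0, fun h => h.elim0, fun h => h.elim0, fun h => h.elim0,
        fun h => h.elim0, fun j => j.elim0, ?_⟩
      funext i j; exact i.elim0
    · exfalso
      have := hstoch ⟨0, Nat.pos_of_ne_zero hm⟩
      simp at this
  · -- n > 0, S nonempty via row decomposition
    have hn' : 0 < n := Nat.pos_of_ne_zero hn
    have hne : S.Nonempty := by
      refine ⟨n, fun i => Pi.single i 1, fun i j => P i j, ?_, fun h j => hP h j, ?_⟩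
      · intro h i
        simp only [Pi.single_apply]
        split <;> norm_num
      · funext i j
        simp [Matrix.sum_apply, Matrix.vecMulVec_apply, Pi.single_apply]
    have hmem : k ∈ S := by
      have h1 : nnRank P = sInf S := rfl
      rw [← hk, h1]
      exact Nat.sInf_mem hne
    obtain ⟨c, r, hc, hr, hdecomp⟩ := hmem
    set s : Fin k → ℝ := fun h => ∑ i, c h i with hs
    have hs0 : ∀ h, 0 ≤ s h := fun h => Finset.sum_nonneg fun i _ => hc h i
    have hczero : ∀ h, s h = 0 → ∀ i, c h i = 0 := by
      intro h hsh i
      have := (Finset.sum_eq_zero_iff_of_nonneg (fun i _ => hc h i)).mp hsh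
      exact this i (Finset.mem_univ i)
    refine ⟨fun h => if hh : s h = 0 then Pi.single (⟨0, hn'⟩ : Fin n) 1
        else fun i => c h i / s h,
      fun h j => s h * r h j, ?_, ?_, ?_, ?_, ?_⟩
    · intro h i
      by_cases hh : s h = 0
      · simp only [dif_pos hh, Pi.single_apply]
        split <;> norm_num
      · simp only [hh, dif_neg, not_false_iff]
        exact div_nonneg (hc h i) (hs0 h)
    · intro h j
      exact mul_nonneg (hs0 h) (hr h j)
    · intro h
      by_cases hh : s h = 0
      · simp only [dif_pos hh]
        simp [Pi.single_apply]
      · simp only [hh, dif_neg, not_false_iff]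
        rw [← Finset.sum_div]
        exact div_self hh
    · intro j
      have hentry : ∀ i, P i j = ∑ h, c h i * r h j := by
        intro i
        rw [hdecomp]
        simp [Matrix.sum_apply, Matrix.vecMulVec_apply]
      calc ∑ h, s h * r h j = ∑ h, ∑ i, c h i * r h j := by
            refine Finset.sum_congr rfl fun h _ => ?_
            rw [hs, Finset.sum_mul]
        _ = ∑ i, ∑ h, c h i * r h j := Finset.sum_comm
        _ = ∑ i, P i j := by
            refine Finset.sum_congr rfl fun i _ => (hentry i).symm
        _ = 1 := hstoch j
    · rw [hdecomp]
      refine Finset.sum_congr rfl fun h _ => ?_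
      funext i j
      simp only [Matrix.vecMulVec_apply]
      by_cases hh : s h = 0
      · simp [hh, hczero h hh i]
      · simp only [hh, dif_neg, not_false_iff]
        field_simp
end

section
/- The nonnegative rank is lower semicontinuous on the set of nonnegative matrices: if P is a nonnegative n×m matrix without zero columns and rk₊(P) = k, then there exists ε > 0 such that every nonnegative matrix N with Frobenius distance ‖N − P‖_F < ε satisfies rk₊(N) ≥ k. -/
/-!
Rescaling each dyad `c dᵀ` of a nonnegative factorization of `N` so that `c` has entry sum `1`
bounds all entries of the factors by the column sums of `N`. Hence, among matrices with bounded
column sums, the sums of `r` nonnegative dyads form a continuous image of a compact set, so the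
set of all sums of `r` nonnegative dyads is closed. As `rk₊ P = k`, the matrix `P` lies in the
open complement of the set of sums of `k - 1` nonnegative dyads, and so does every matrix near
`P`; a nonnegative matrix with `rk₊ N < k` does not.
-/

open Matrix BigOperators Filter Topology

section NonnegDyadSums

variable {ι κ : Type*}

def dyadSum {r : ℕ} (p : (Fin r → ι → ℝ) × (Fin r → κ → ℝ)) : Matrix ι κ ℝ :=
  ∑ h, vecMulVec (p.1 h) (p.2 h)

def nonnegDyadSums (ι κ : Type*) (r : ℕ) : Set (Matrix ι κ ℝ) :=
  {N | ∃ (c : Fin r → ι → ℝ) (d : Fin r → κ → ℝ),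
    (∀ h i, 0 ≤ c h i) ∧ (∀ h j, 0 ≤ d h j) ∧ N = ∑ h, vecMulVec (c h) (d h)}

lemma sum_vecMulVec_apply {r : ℕ} (c : Fin r → ι → ℝ) (d : Fin r → κ → ℝ) (i : ι) (j : κ) :
    (∑ h, vecMulVec (c h) (d h)) i j = ∑ h, c h i * d h j := by
  simp only [Matrix.sum_apply, vecMulVec_apply]

lemma continuous_dyadSum (r : ℕ) :
    Continuous (dyadSum : (Fin r → ι → ℝ) × (Fin r → κ → ℝ) → Matrix ι κ ℝ) := by
  refine continuous_matrix fun i j => ?_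
  simp only [dyadSum, sum_vecMulVec_apply]
  fun_prop

lemma nonnegDyadSums_mono : Monotone (nonnegDyadSums ι κ) := by
  intro r s hrs N ⟨c, d, hc, hd, hN⟩
  obtain ⟨t, rfl⟩ := Nat.exists_eq_add_of_le hrs
  refine ⟨Fin.append c 0, Fin.append d 0, ?_, ?_, ?_⟩
  · exact Fin.addCases (by simpa using hc) (by simp)
  · exact Fin.addCases (by simpa using hd) (by simp)
  · simp [Fin.sum_univ_add, hN]

lemma mem_nonnegDyadSums_of_nonneg {n : ℕ} {N : Matrix (Fin n) κ ℝ} (hN : ∀ i j, 0 ≤ N i j) :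
    N ∈ nonnegDyadSums (Fin n) κ n := by
  refine ⟨fun h => Pi.single h 1, fun h j => N h j, fun h i => ?_, hN, ?_⟩
  · by_cases hi : i = h <;> simp [hi]
  · ext i j
    simp [sum_vecMulVec_apply, Pi.single_apply]

lemma dyadSum_image_Icc_subset_nonnegDyadSums (r : ℕ) (B : ℝ) :
    dyadSum '' (Set.Icc (0 : Fin r → ι → ℝ) 1 ×ˢ Set.Icc 0 (fun _ _ => B)) ⊆
      nonnegDyadSums ι κ r := by
  rintro _ ⟨⟨c, d⟩, ⟨⟨hc, -⟩, ⟨hd, -⟩⟩, rfl⟩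
  exact ⟨c, d, fun h i => hc h i, fun h j => hd h j, rfl⟩

variable [Fintype ι]

lemma exists_dyadSum_eq_of_colSum_le {r : ℕ} {N : Matrix ι κ ℝ} {B : ℝ}
    (hN : N ∈ nonnegDyadSums ι κ r) (hB : ∀ j, ∑ i, N i j ≤ B) :
    ∃ p ∈ Set.Icc (0 : Fin r → ι → ℝ) 1 ×ˢ Set.Icc 0 (fun _ _ => B), dyadSum p = N := by
  obtain ⟨c, d, hc, hd, rfl⟩ := hN
  set s : Fin r → ℝ := fun h => ∑ i, c h i
  have hs : ∀ h, 0 ≤ s h := fun h => Finset.sum_nonneg fun i _ => hc h i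
  have hcs : ∀ h i, c h i ≤ s h := fun h i =>
    Finset.single_le_sum (fun i _ => hc h i) (Finset.mem_univ i)
  refine ⟨(fun h i => c h i / s h, fun h j => s h * d h j), ⟨⟨?_, ?_⟩, ⟨?_, ?_⟩⟩, ?_⟩
  · exact fun h i => div_nonneg (hc h i) (hs h)
  · exact fun h i => div_le_one_of_le₀ (hcs h i) (hs h)
  · exact fun h j => mul_nonneg (hs h) (hd h j)
  · intro h j
    refine le_trans ?_ (hB j)
    simp only [s, Finset.sum_mul, sum_vecMulVec_apply]
    exact Finset.sum_le_sum fun i _ => Finset.single_le_sum (f := fun h => c h i * d h j)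
      (fun h _ => mul_nonneg (hc h i) (hd h j)) (Finset.mem_univ h)
  · ext i j
    simp only [dyadSum, sum_vecMulVec_apply]
    refine Finset.sum_congr rfl fun h _ => ?_
    rcases (hs h).eq_or_lt with h0 | hpos
    · have : c h i = 0 := le_antisymm (h0 ▸ hcs h i) (hc h i)
      simp [this]
    · field_simp [hpos.ne']

lemma isCompact_nonnegDyadSums_inter_colSum_le (r : ℕ) (B : ℝ) :
    IsCompact (nonnegDyadSums ι κ r ∩ {N | ∀ j, ∑ i, N i j ≤ B}) := by
  have hS : IsClosed {N : Matrix ι κ ℝ | ∀ j, ∑ i, N i j ≤ B} :=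
    Set.ofPred_forall _ ▸ isClosed_iInter fun j => isClosed_le (by fun_prop) continuous_const
  set S := {N : Matrix ι κ ℝ | ∀ j, ∑ i, N i j ≤ B}
  have heq : nonnegDyadSums ι κ r ∩ S =
      dyadSum '' (Set.Icc (0 : Fin r → ι → ℝ) 1 ×ˢ Set.Icc 0 (fun _ _ => B)) ∩ S := by
    refine Set.Subset.antisymm (fun N ⟨hN, hB⟩ => ⟨?_, hB⟩)
      (Set.inter_subset_inter_left _ (dyadSum_image_Icc_subset_nonnegDyadSums r B))
    obtain ⟨p, hp, rfl⟩ := exists_dyadSum_eq_of_colSum_le hN hB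
    exact ⟨p, hp, rfl⟩
  rw [heq]
  exact ((isCompact_Icc.prod isCompact_Icc).image (continuous_dyadSum r)).inter_right hS

lemma isClosed_nonnegDyadSums [Fintype κ] (r : ℕ) : IsClosed (nonnegDyadSums ι κ r) := by
  refine isClosed_of_closure_subset fun N hN => ?_
  set B := ∑ j, |∑ i, N i j| + 1
  have hU : IsOpen {M : Matrix ι κ ℝ | ∀ j, ∑ i, M i j < B} :=
    Set.ofPred_forall _ ▸ isOpen_iInter_of_finite fun j => isOpen_lt (by fun_prop) continuous_const
  have hNU : ∀ j, ∑ i, N i j < B := fun j =>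
    (le_abs_self _).trans_lt <| lt_add_of_le_of_pos
      (Finset.single_le_sum (f := fun j => |∑ i, N i j|) (fun _ _ => abs_nonneg _)
        (Finset.mem_univ j)) one_pos
  have hsub : {M : Matrix ι κ ℝ | ∀ j, ∑ i, M i j < B} ∩ nonnegDyadSums ι κ r ⊆
      nonnegDyadSums ι κ r ∩ {M | ∀ j, ∑ i, M i j ≤ B} :=
    fun M ⟨hM, hr⟩ => ⟨hr, fun j => (hM j).le⟩
  have hN' := closure_mono hsub (hU.inter_closure ⟨hNU, hN⟩)
  exact ((isCompact_nonnegDyadSums_inter_colSum_le r B).isClosed.closure_subset hN').1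

end NonnegDyadSums

section Frobenius

attribute [local instance] Matrix.frobeniusNormedAddCommGroup

lemma frobDist_eq_dist {n m : ℕ} (P N : Matrix (Fin n) (Fin m) ℝ) : frobDist P N = dist P N := by
  rw [dist_eq_norm, frobenius_norm_def, frobDist, Real.sqrt_eq_rpow]
  simp [sq_abs]

lemma exists_frobDist_lt_subset {n m : ℕ} {P : Matrix (Fin n) (Fin m) ℝ}
    {U : Set (Matrix (Fin n) (Fin m) ℝ)} (hU : U ∈ 𝓝 P) :
    ∃ ε > 0, ∀ N, frobDist N P < ε → N ∈ U := by
  obtain ⟨ε, hε, hball⟩ := Metric.mem_nhds_iff.mp hU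
  exact ⟨ε, hε, fun N hN => hball (by rwa [Metric.mem_ball, ← frobDist_eq_dist])⟩

end Frobenius

lemma nnRank_le_of_mem_nonnegDyadSums {n m r : ℕ} {N : Matrix (Fin n) (Fin m) ℝ}
    (h : N ∈ nonnegDyadSums (Fin n) (Fin m) r) : nnRank N ≤ r :=
  Nat.sInf_le h

lemma mem_nonnegDyadSums_of_nnRank_le {n m r : ℕ} {N : Matrix (Fin n) (Fin m) ℝ}
    (hN : ∀ i j, 0 ≤ N i j) (h : nnRank N ≤ r) : N ∈ nonnegDyadSums (Fin n) (Fin m) r :=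
  nonnegDyadSums_mono h <| Nat.sInf_mem (s := {k | N ∈ nonnegDyadSums _ _ k})
    ⟨n, mem_nonnegDyadSums_of_nonneg hN⟩

theorem nnRank_lowerSemicontinuous_general {n m : ℕ} (P : Matrix (Fin n) (Fin m) ℝ)
    (k : ℕ) (hk : nnRank P = k) :
    ∃ ε > (0 : ℝ), ∀ N : Matrix (Fin n) (Fin m) ℝ,
      (∀ i j, 0 ≤ N i j) → frobDist N P < ε → k ≤ nnRank N := by
  obtain _ | r := k
  · exact ⟨1, one_pos, fun _ _ _ => Nat.zero_le _⟩
  have hP : P ∉ nonnegDyadSums (Fin n) (Fin m) r := fun h => by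
    have := nnRank_le_of_mem_nonnegDyadSums h
    omega
  obtain ⟨ε, hε, hball⟩ :=
    exists_frobDist_lt_subset ((isClosed_nonnegDyadSums r).isOpen_compl.mem_nhds hP)
  refine ⟨ε, hε, fun N hN hNP => ?_⟩
  by_contra! hlt
  exact hball N hNP (mem_nonnegDyadSums_of_nnRank_le hN (Nat.lt_succ_iff.mp hlt))

theorem nnRank_lowerSemicontinuous {n m : ℕ} (P : Matrix (Fin n) (Fin m) ℝ)
    (hP : ∀ i j, 0 ≤ P i j) (hcol : ∀ j, ∃ i, P i j ≠ 0)
    (k : ℕ) (hk : nnRank P = k) :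
    ∃ ε > (0 : ℝ), ∀ N : Matrix (Fin n) (Fin m) ℝ,
      (∀ i j, 0 ≤ N i j) → frobDist N P < ε → k ≤ nnRank N :=
  nnRank_lowerSemicontinuous_general P k hk
end

section
/- Let P be a nonnegative n×m matrix without zero columns and with rank(P) > 1. For every ε > 0 there exists a nonnegative matrix N with ‖N − P‖_F < ε such that rk₊(N) = rk₊(P) and N is not a scalar multiple of P. -/
open Matrix BigOperators Filter Topology

/-!
Scaling a single column of `P` by `1 + δ` is right multiplication by a positive diagonal
matrix. Such matrices and their inverses are nonnegative, and right multiplication by a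
nonnegative matrix cannot increase the nonnegative rank, so the scaled matrix has the same
nonnegative rank as `P`. For `δ → 0` it tends to `P`; and since `P` has two nonzero columns
(its rank exceeds one), scaling only one of them never yields a scalar multiple of `P`.
-/

section

variable {n m p : ℕ}

lemma nnRank_set_nonempty {P : Matrix (Fin n) (Fin m) ℝ} (hP : ∀ i j, 0 ≤ P i j) :
    {k : ℕ | ∃ (c : Fin k → Fin n → ℝ) (r : Fin k → Fin m → ℝ),
      (∀ h i, 0 ≤ c h i) ∧ (∀ h j, 0 ≤ r h j) ∧
      P = ∑ h, vecMulVec (c h) (r h)}.Nonempty := by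
  refine ⟨m, fun j i => P i j, fun j => Pi.single j 1, fun h i => hP i h,
    fun h j => by dsimp only; rw [Pi.single_apply]; split_ifs <;> norm_num, ?_⟩
  ext i j
  simp [Matrix.sum_apply, vecMulVec_apply, Pi.single_apply]

lemma exists_nonneg_decomposition_nnRank {P : Matrix (Fin n) (Fin m) ℝ}
    (hP : ∀ i j, 0 ≤ P i j) :
    ∃ (c : Fin (nnRank P) → Fin n → ℝ) (r : Fin (nnRank P) → Fin m → ℝ),
      (∀ h i, 0 ≤ c h i) ∧ (∀ h j, 0 ≤ r h j) ∧ P = ∑ h, vecMulVec (c h) (r h) :=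
  Nat.sInf_mem (nnRank_set_nonempty hP)

lemma nnRank_mul_le {P : Matrix (Fin n) (Fin m) ℝ} {Q : Matrix (Fin m) (Fin p) ℝ}
    (hP : ∀ i j, 0 ≤ P i j) (hQ : ∀ i j, 0 ≤ Q i j) :
    nnRank (P * Q) ≤ nnRank P := by
  obtain ⟨c, r, hc, hr, hPcr⟩ := exists_nonneg_decomposition_nnRank hP
  refine Nat.sInf_le ⟨c, fun h => r h ᵥ* Q, hc,
    fun h j => dotProduct_nonneg_of_nonneg (hr h) fun k => hQ k j, ?_⟩
  nth_rw 1 [hPcr]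
  simp only [Matrix.sum_mul, vecMulVec_mul]

lemma mul_diagonal_nonneg {P : Matrix (Fin n) (Fin m) ℝ} {d : Fin m → ℝ}
    (hP : ∀ i j, 0 ≤ P i j) (hd : ∀ j, 0 ≤ d j) (i : Fin n) (j : Fin m) :
    0 ≤ (P * diagonal d) i j := by
  rw [mul_diagonal]
  exact mul_nonneg (hP i j) (hd j)

lemma diagonal_nonneg {d : Fin m → ℝ} (hd : ∀ j, 0 ≤ d j) (i j : Fin m) :
    0 ≤ diagonal d i j := by
  rw [diagonal_apply]
  split_ifs
  exacts [hd i, le_rfl]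

lemma nnRank_mul_diagonal {P : Matrix (Fin n) (Fin m) ℝ} {d : Fin m → ℝ}
    (hP : ∀ i j, 0 ≤ P i j) (hd : ∀ j, 0 < d j) :
    nnRank (P * diagonal d) = nnRank P := by
  refine le_antisymm (nnRank_mul_le hP (diagonal_nonneg fun j => (hd j).le)) ?_
  have hdd : diagonal d * diagonal d⁻¹ = 1 := by
    rw [diagonal_mul_diagonal, ← diagonal_one]
    exact congrArg diagonal (funext fun j => mul_inv_cancel₀ (hd j).ne')
  calc nnRank P = nnRank (P * diagonal d * diagonal d⁻¹) := by
        rw [Matrix.mul_assoc, hdd, Matrix.mul_one]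
    _ ≤ nnRank (P * diagonal d) :=
      nnRank_mul_le (mul_diagonal_nonneg hP fun j => (hd j).le)
        (diagonal_nonneg fun j => inv_nonneg.2 (hd j).le)

lemma frobDist_self (P : Matrix (Fin n) (Fin m) ℝ) : frobDist P P = 0 := by
  simp [frobDist]

lemma continuous_frobDist_left (P : Matrix (Fin n) (Fin m) ℝ) :
    Continuous fun N => frobDist N P := by
  unfold frobDist
  fun_prop

lemma eq_of_mul_diagonal_eq_smul {P : Matrix (Fin n) (Fin m) ℝ} {d : Fin m → ℝ}
    {lam : ℝ} (h : P * diagonal d = lam • P) {j : Fin m} (hj : ∃ i, P i j ≠ 0) :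
    d j = lam := by
  obtain ⟨i, hi⟩ := hj
  have hij := congrFun (congrFun h i) j
  rw [mul_diagonal, Matrix.smul_apply, smul_eq_mul, mul_comm] at hij
  exact mul_right_cancel₀ hi hij

end

theorem barycentric_perturbation {n m : ℕ} (P : Matrix (Fin n) (Fin m) ℝ)
    (hP : ∀ i j, 0 ≤ P i j) (hcol : ∀ j, ∃ i, P i j ≠ 0)
    (hrk : 1 < P.rank) :
    ∀ ε > (0 : ℝ), ∃ N : Matrix (Fin n) (Fin m) ℝ,
      (∀ i j, 0 ≤ N i j) ∧ frobDist N P < ε ∧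
      nnRank N = nnRank P ∧ ∀ lam : ℝ, N ≠ lam • P := by
  intro ε hε
  have hm : 1 < m := hrk.trans_le (rank_le_width P)
  let j₀ : Fin m := ⟨0, by omega⟩
  let j₁ : Fin m := ⟨1, hm⟩
  let d : ℝ → Fin m → ℝ := fun δ => 1 + Pi.single j₀ δ
  have hd_pos : ∀ δ > 0, ∀ j, 0 < d δ j := fun δ hδ j => by
    rcases eq_or_ne j j₀ with rfl | hj <;> simp [d, *, add_pos]
  have hclose : ∀ᶠ δ in 𝓝 0, frobDist (P * diagonal (d δ)) P < ε := by
    have hcont : Continuous fun δ => frobDist (P * diagonal (d δ)) P :=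
      (continuous_frobDist_left P).comp <| continuous_const.matrix_mul
        (continuous_const.add (continuous_single j₀)).matrix_diagonal
    refine (hcont.tendsto' 0 0 ?_).eventually_lt_const hε
    simp [d, frobDist_self]
  obtain ⟨δ, hδε, hδ⟩ :=
    ((hclose.filter_mono nhdsWithin_le_nhds).and (self_mem_nhdsWithin (s := Set.Ioi 0))).exists
  refine ⟨P * diagonal (d δ), mul_diagonal_nonneg hP fun j => (hd_pos δ hδ j).le, hδε,
    nnRank_mul_diagonal hP (hd_pos δ hδ), fun lam hlam => ?_⟩
  have h₀ := eq_of_mul_diagonal_eq_smul hlam (hcol j₀)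
  have h₁ := eq_of_mul_diagonal_eq_smul hlam (hcol j₁)
  simp [d, j₀, j₁, Fin.ext_iff] at h₀ h₁
  linarith
end

section
/- Let P be a nonnegative n×m matrix with columns c₁,…,cₘ, let b = (1/m)Σⱼ cⱼ be the average of the columns, and for δ ∈ [0,1] let N_δ be the matrix with columns cⱼ + δ(b − cⱼ). Then rk₊(N_δ) ≤ rk₊(P) for all δ ∈ [0,1]. -/
open Matrix BigOperators Filter Topology

theorem nnRank_barycenter_shrink {n m : ℕ} (P : Matrix (Fin n) (Fin m) ℝ)
    (hP : ∀ i j, 0 ≤ P i j) (δ : ℝ) (hδ0 : 0 ≤ δ) (hδ1 : δ ≤ 1) :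
    nnRank (Matrix.of fun i j =>
        P i j + δ * ((1 / (m : ℝ)) * (∑ j', P i j') - P i j)) ≤ nnRank P := by
  classical
  have hne : {k : ℕ | ∃ (c : Fin k → Fin n → ℝ) (r : Fin k → Fin m → ℝ),
      (∀ h i, 0 ≤ c h i) ∧ (∀ h j, 0 ≤ r h j) ∧
      P = ∑ h, Matrix.vecMulVec (c h) (r h)}.Nonempty := by
    refine ⟨n, fun h i => if h = i then 1 else 0, fun h j => P h j, ?_, ?_, ?_⟩
    · intro h i; by_cases hhi : h = i <;> simp [hhi]
    · intro h j; exact hP h j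
    · ext i j
      simp [Matrix.sum_apply, Matrix.vecMulVec_apply, ite_mul]
  obtain ⟨c, r, hc, hr, hPe⟩ := Nat.sInf_mem hne
  apply Nat.sInf_le
  refine ⟨c, fun h j => (1 - δ) * r h j + δ * ((1 / (m : ℝ)) * ∑ j', r h j'),
    hc, ?_, ?_⟩
  · intro h j
    have h1 : 0 ≤ (1 - δ) * r h j := mul_nonneg (by linarith) (hr h j)
    have h2 : 0 ≤ δ * ((1 / (m : ℝ)) * ∑ j', r h j') := by
      apply mul_nonneg hδ0
      apply mul_nonneg (by positivity)
      exact Finset.sum_nonneg fun j' _ => hr h j'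
    linarith
  · ext i j
    simp only [Matrix.of_apply, Matrix.sum_apply, Matrix.vecMulVec_apply, hPe]
    rw [Finset.sum_comm]
    simp only [← Finset.mul_sum]
    have key : ∀ h ∈ (Finset.univ : Finset (Fin (nnRank P))),
        c h i * ((1 - δ) * r h j + δ * ((1 / (m : ℝ)) * ∑ j', r h j')) =
        c h i * r h j + δ * ((1 / (m : ℝ)) * (c h i * ∑ j', r h j') - c h i * r h j) :=
      fun h _ => by ring
    rw [Finset.sum_congr rfl key, Finset.sum_add_distrib]
    congr 1
    rw [Finset.mul_sum, ← Finset.sum_sub_distrib, Finset.mul_sum]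
    rfl
end

section
/- Let f : ℝ^{k(n+m)} → ℝ^{n×m} be the map sending ((x_{h,i}), (y_{h,j})) to the matrix Σ_{h=1}^k x_h·(y_h)ᵀ, where x_h = (x_{h,1},…,x_{h,n}) and y_h = (y_{h,1},…,y_{h,m}). If p is a point such that the vectors x₁,…,x_k ∈ ℝⁿ are linearly independent and the vectors y₁,…,y_k ∈ ℝᵐ are linearly independent, then the Jacobian (differential) of f at p has rank k(n+m−k). -/
open Matrix BigOperators Filter Topology

/-! Write `X`, `Y` for the matrices with rows `xₕ`, `yₕ`, so that the map is `(X, Y) ↦ Xᵀ * Y`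
with differential `(U, V) ↦ Uᵀ * Y + Xᵀ * V`. The map is invariant under `(X, Y) ↦ (g X, g⁻ᵀ Y)`
for `g ∈ GL_k`, and the tangent directions `(A X, -Aᵀ Y)` of this action span the kernel of the
differential: right inverses of `X` and `Y`, which exist because their rows are independent, solve
any kernel element for such an `A`. The parametrisation `A ↦ (A X, -Aᵀ Y)` is injective, so the
kernel has dimension `k²` and rank–nullity gives `k (n + m) - k² = k (n + m - k)`. -/

theorem LinearMap.fderiv_apply₂ {𝕜 E F G : Type*} [NontriviallyNormedField 𝕜] [CompleteSpace 𝕜]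
    [NormedAddCommGroup E] [NormedSpace 𝕜 E] [FiniteDimensional 𝕜 E]
    [NormedAddCommGroup F] [NormedSpace 𝕜 F] [FiniteDimensional 𝕜 F]
    [NormedAddCommGroup G] [NormedSpace 𝕜 G]
    (B : E →ₗ[𝕜] F →ₗ[𝕜] G) (p q : E × F) :
    fderiv 𝕜 (fun q : E × F => B q.1 q.2) p q = B p.1 q.2 + B q.1 p.2 :=
  congrArg (· q) (B.toContinuousBilinearMap.isBoundedBilinearMap.fderiv p)

namespace Matrix

variable {K ι n m : Type*} [Field K] [Fintype ι]

theorem exists_mul_eq_one_of_linearIndependent_row [Fintype n] [DecidableEq ι] {X : Matrix ι n K}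
    (hX : LinearIndependent K X.row) : ∃ X' : Matrix n ι K, X * X' = 1 := by
  refine mulVec_surjective_iff_exists_right_inverse.1 <|
    LinearMap.range_eq_top (f := X.mulVecLin).1 <| Submodule.eq_top_of_finrank_eq ?_
  rw [← rank, hX.rank_matrix, Module.finrank_fintype_fun_eq_card]

variable (K ι n m) in
def transposeMulLinearMap : Matrix ι n K →ₗ[K] Matrix ι m K →ₗ[K] Matrix n m K :=
  mulLinearMap K ∘ₗ (transposeLinearEquiv ι n K K).toLinearMap

def transposeMulDeriv (X : Matrix ι n K) (Y : Matrix ι m K) :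
    Matrix ι n K × Matrix ι m K →ₗ[K] Matrix n m K :=
  ((transposeMulLinearMap K ι n m).flip Y).coprod (transposeMulLinearMap K ι n m X)

@[simp]
theorem transposeMulDeriv_apply (X U : Matrix ι n K) (Y V : Matrix ι m K) :
    transposeMulDeriv X Y (U, V) = Uᵀ * Y + Xᵀ * V := rfl

def gaugeTangent (X : Matrix ι n K) (Y : Matrix ι m K) :
    Matrix ι ι K →ₗ[K] Matrix ι n K × Matrix ι m K :=
  (mulRightLinearMap ι K X).prod
    (-(mulRightLinearMap ι K Y ∘ₗ (transposeLinearEquiv ι ι K K).toLinearMap))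

@[simp]
theorem gaugeTangent_apply (X : Matrix ι n K) (Y : Matrix ι m K) (A : Matrix ι ι K) :
    gaugeTangent X Y A = (A * X, -(Aᵀ * Y)) := rfl

variable [DecidableEq ι] {X : Matrix ι n K} {Y : Matrix ι m K}

theorem gaugeTangent_injective [Fintype n] {X' : Matrix n ι K} (hX : X * X' = 1) :
    Function.Injective (gaugeTangent X Y) := by
  refine (injective_iff_map_eq_zero _).2 fun A hA => ?_
  have hAX : A * X = 0 := congrArg Prod.fst hA
  rw [← A.mul_one, ← hX, ← Matrix.mul_assoc, hAX, Matrix.zero_mul]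

theorem ker_transposeMulDeriv [Fintype n] [Fintype m] {X' : Matrix n ι K} {Y' : Matrix m ι K}
    (hX : X * X' = 1) (hY : Y * Y' = 1) :
    LinearMap.ker (transposeMulDeriv X Y) = LinearMap.range (gaugeTangent X Y) := by
  ext ⟨U, V⟩
  simp only [LinearMap.mem_ker, LinearMap.mem_range, transposeMulDeriv_apply, gaugeTangent_apply,
    Prod.ext_iff]
  constructor
  · intro h
    set A := -(V * Y')ᵀ with hA
    have hU : U = A * X := by
      calc U = (Uᵀ * Y * Y')ᵀ := by rw [Matrix.mul_assoc, hY, Matrix.mul_one, transpose_transpose]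
        _ = (-(Xᵀ * V) * Y')ᵀ := by rw [eq_neg_of_add_eq_zero_left h]
        _ = A * X := by simp [hA, transpose_mul, Matrix.mul_assoc]
    refine ⟨A, hU.symm, ?_⟩
    calc -(Aᵀ * Y) = X'ᵀ * -((A * X)ᵀ * Y) := by
          rw [transpose_mul, Matrix.mul_neg, ← Matrix.mul_assoc, ← Matrix.mul_assoc,
            ← transpose_mul, hX, transpose_one, Matrix.one_mul]
      _ = X'ᵀ * (Xᵀ * V) := by rw [← hU, eq_neg_of_add_eq_zero_right h]
      _ = V := by rw [← Matrix.mul_assoc, ← transpose_mul, hX, transpose_one, Matrix.one_mul]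
  · rintro ⟨A, rfl, rfl⟩
    simp [transpose_mul, Matrix.mul_assoc]

theorem finrank_range_transposeMulDeriv [Fintype n] [Fintype m]
    (hX : LinearIndependent K X.row) (hY : LinearIndependent K Y.row) :
    Module.finrank K (LinearMap.range (transposeMulDeriv X Y)) =
      Fintype.card ι * (Fintype.card n + Fintype.card m - Fintype.card ι) := by
  obtain ⟨X', hX'⟩ := exists_mul_eq_one_of_linearIndependent_row hX
  obtain ⟨Y', hY'⟩ := exists_mul_eq_one_of_linearIndependent_row hY
  have hker : Module.finrank K (LinearMap.ker (transposeMulDeriv X Y)) =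
      Fintype.card ι * Fintype.card ι := by
    rw [ker_transposeMulDeriv hX' hY', LinearMap.finrank_range_of_inj (gaugeTangent_injective hX'),
      Module.finrank_matrix, Module.finrank_self, mul_one]
  have hrn := (transposeMulDeriv X Y).finrank_range_add_finrank_ker
  rw [hker, Module.finrank_prod, Module.finrank_matrix, Module.finrank_matrix,
    Module.finrank_self] at hrn
  rw [Nat.mul_sub, Nat.mul_add]
  omega

end Matrix

theorem jacobian_full_rank_general {n m k : ℕ}
    (p : (Fin k → (Fin n → ℝ)) × (Fin k → (Fin m → ℝ)))
    (hx : LinearIndependent ℝ p.1) (hy : LinearIndependent ℝ p.2) :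
    Module.finrank ℝ
      (LinearMap.range
        ((fderiv ℝ
          (fun q : (Fin k → (Fin n → ℝ)) × (Fin k → (Fin m → ℝ)) =>
            fun i j => ∑ h, q.1 h i * q.2 h j) p)).toLinearMap) =
      k * (n + m - k) := by
  have hD : (fderiv ℝ (fun q : (Fin k → (Fin n → ℝ)) × (Fin k → (Fin m → ℝ)) =>
      fun i j => ∑ h, q.1 h i * q.2 h j) p).toLinearMap = transposeMulDeriv p.1 p.2 :=
    LinearMap.ext fun q => by
      -- the Pi-type and `Matrix` instances agree only up to unfolding, so `E`, `F`, `G` are given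
      have h := LinearMap.fderiv_apply₂ (E := Fin k → Fin n → ℝ) (F := Fin k → Fin m → ℝ)
        (G := Fin n → Fin m → ℝ) (transposeMulLinearMap ℝ (Fin k) (Fin n) (Fin m)) p q
      rw [add_comm] at h
      exact h
  rw [hD]
  exact (finrank_range_transposeMulDeriv hx hy).trans (by simp only [Fintype.card_fin])

theorem jacobian_full_rank {n m k : ℕ} (hkn : k ≤ n) (hkm : k ≤ m)
    (p : (Fin k → (Fin n → ℝ)) × (Fin k → (Fin m → ℝ)))
    (hx : LinearIndependent ℝ p.1) (hy : LinearIndependent ℝ p.2) :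
    Module.finrank ℝ
      (LinearMap.range
        ((fderiv ℝ
          (fun q : (Fin k → (Fin n → ℝ)) × (Fin k → (Fin m → ℝ)) =>
            fun i j => ∑ h, q.1 h i * q.2 h j) p)).toLinearMap) =
      k * (n + m - k) :=
  jacobian_full_rank_general p hx hy
end

section
/- Let k ≤ min{n,m}, and let f : ℝ^{k(n+m)} → ℝ^{n×m} send ((x_h),(y_h))_{h=1}^k to Σ_h x_h·(y_h)ᵀ. The rank of the differential of f at any point is at most k(n+m−k). -/
open Matrix BigOperators Filter Topology

/-- the bilinear map underlying `f`. -/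
def jrBil (n m k : ℕ) : (Fin k → Fin n → ℝ) →ₗ[ℝ] (Fin k → Fin m → ℝ) →ₗ[ℝ] (Fin n → Fin m → ℝ) :=
  LinearMap.mk₂ ℝ (fun x y i j => ∑ h, x h i * y h j)
    (fun x x' y => by funext i j; simp [add_mul, Finset.sum_add_distrib])
    (fun c x y => by funext i j; simp [Finset.mul_sum, mul_assoc])
    (fun x y y' => by funext i j; simp [mul_add, Finset.sum_add_distrib])
    (fun c x y => by funext i j; simp [Finset.mul_sum]; ring_nf; simp [mul_comm, mul_left_comm])

noncomputable def jrCBil (n m k : ℕ) :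
    (Fin k → Fin n → ℝ) →L[ℝ] (Fin k → Fin m → ℝ) →L[ℝ] (Fin n → Fin m → ℝ) :=
  LinearMap.toContinuousLinearMap
    (((LinearMap.toContinuousLinearMap :
        ((Fin k → Fin m → ℝ) →ₗ[ℝ] (Fin n → Fin m → ℝ)) ≃ₗ[ℝ] _) :
        ((Fin k → Fin m → ℝ) →ₗ[ℝ] (Fin n → Fin m → ℝ)) →ₗ[ℝ] _) ∘ₗ jrBil n m k)

lemma jrCBil_apply (n m k : ℕ) (x y) : jrCBil n m k x y = fun i j => ∑ h, x h i * y h j := by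
  simp [jrCBil, jrBil]

lemma jrFDeriv {n m k : ℕ} (p : (Fin k → (Fin n → ℝ)) × (Fin k → (Fin m → ℝ))) :
    fderiv ℝ
      (fun q : (Fin k → (Fin n → ℝ)) × (Fin k → (Fin m → ℝ)) =>
        fun i j => ∑ h, q.1 h i * q.2 h j) p =
    ((jrCBil n m k).isBoundedBilinearMap.deriv p) := by
  have h1 : (fun q : (Fin k → (Fin n → ℝ)) × (Fin k → (Fin m → ℝ)) =>
      fun i j => ∑ h, q.1 h i * q.2 h j) = fun q => jrCBil n m k q.1 q.2 := by
    funext q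
    rw [jrCBil_apply]
  rw [h1]
  exact (jrCBil n m k).isBoundedBilinearMap.fderiv p

/-- A pi submodule with constant fibre is equivalent to a pi of the fibres. -/
def jrPiEquiv {ι : Type*} {E : Type*} [AddCommGroup E] [Module ℝ E] (p : Submodule ℝ E) :
    (∀ _ : ι, ↥p) ≃ₗ[ℝ] ↥(Submodule.pi Set.univ (fun _ : ι => p)) where
  toFun v := ⟨fun i => (v i : E), fun i _ => (v i).2⟩
  invFun w := fun i => ⟨w.1 i, w.2 i (Set.mem_univ i)⟩
  map_add' _ _ := rfl
  map_smul' _ _ := rfl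
  left_inv _ := rfl
  right_inv _ := rfl

lemma jrFinrankPi {ι : Type*} [Fintype ι] {E : Type*} [AddCommGroup E] [Module ℝ E]
    [FiniteDimensional ℝ E] (p : Submodule ℝ E) :
    Module.finrank ℝ (Submodule.pi Set.univ (fun _ : ι => p)) =
      Fintype.card ι * Module.finrank ℝ p := by
  rw [← LinearEquiv.finrank_eq (jrPiEquiv p), Module.finrank_pi_fintype,
    Finset.sum_const, Finset.card_univ, smul_eq_mul]

/-- transpose as a linear equivalence of function types -/
noncomputable def jrFlip (n m : ℕ) : (Fin n → Fin m → ℝ) ≃ₗ[ℝ] (Fin m → Fin n → ℝ) where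
  toFun M := fun j i => M i j
  invFun M := fun i j => M j i
  map_add' _ _ := rfl
  map_smul' _ _ := rfl
  left_inv _ := rfl
  right_inv _ := rfl

lemma jrArith {n m k r s : ℕ} (hkn : k ≤ n) (hkm : k ≤ m) (hrk : r ≤ k) (hsk : s ≤ k) :
    n * r + m * s ≤ k * (n + m - k) + s * r := by
  obtain ⟨a, rfl⟩ : ∃ a, n = k + a := ⟨n - k, by omega⟩
  obtain ⟨b, rfl⟩ : ∃ b, m = k + b := ⟨m - k, by omega⟩
  have h1 : k + a + (k + b) - k = k + a + b := by omega
  rw [h1]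
  have hr' : (r : ℤ) ≤ k := by exact_mod_cast hrk
  have hs' : (s : ℤ) ≤ k := by exact_mod_cast hsk
  zify
  nlinarith [mul_nonneg (by linarith : (0:ℤ) ≤ (k:ℤ) - r) (by linarith : (0:ℤ) ≤ (k:ℤ) - s),
    mul_nonneg (by positivity : (0:ℤ) ≤ (a:ℤ)) (by linarith : (0:ℤ) ≤ (k:ℤ) - r),
    mul_nonneg (by positivity : (0:ℤ) ≤ (b:ℤ)) (by linarith : (0:ℤ) ≤ (k:ℤ) - s)]


theorem jacobian_rank_le {n m k : ℕ} (hkn : k ≤ n) (hkm : k ≤ m)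
    (p : (Fin k → (Fin n → ℝ)) × (Fin k → (Fin m → ℝ))) :
    Module.finrank ℝ
      (LinearMap.range
        ((fderiv ℝ
          (fun q : (Fin k → (Fin n → ℝ)) × (Fin k → (Fin m → ℝ)) =>
            fun i j => ∑ h, q.1 h i * q.2 h j) p)).toLinearMap) ≤
      k * (n + m - k) := by
  classical
  rw [jrFDeriv p]
  set S : Submodule ℝ (Fin n → ℝ) := Submodule.span ℝ (Set.range p.1) with hS
  set R : Submodule ℝ (Fin m → ℝ) := Submodule.span ℝ (Set.range p.2) with hR
  set V1 : Submodule ℝ (Fin n → Fin m → ℝ) :=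
    Submodule.pi Set.univ (fun _ : Fin n => R) with hV1
  set V2 : Submodule ℝ (Fin n → Fin m → ℝ) :=
    Submodule.comap (jrFlip n m : (Fin n → Fin m → ℝ) →ₗ[ℝ] _)
      (Submodule.pi Set.univ (fun _ : Fin m => S)) with hV2
  -- membership criteria
  have memV1 : ∀ (x : Fin k → Fin n → ℝ) (y : Fin k → Fin m → ℝ),
      (Set.range y ⊆ (R : Set (Fin m → ℝ))) → jrCBil n m k x y ∈ V1 := by
    intro x y hy
    intro i _
    have : (jrCBil n m k x y) i = ∑ h, x h i • y h := by
      rw [jrCBil_apply]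
      funext j
      simp [Finset.sum_apply]
    rw [this]
    exact Submodule.sum_mem _ fun h _ => Submodule.smul_mem _ _ (hy ⟨h, rfl⟩)
  have memV2 : ∀ (x : Fin k → Fin n → ℝ) (y : Fin k → Fin m → ℝ),
      (Set.range x ⊆ (S : Set (Fin n → ℝ))) → jrCBil n m k x y ∈ V2 := by
    intro x y hx
    intro j _
    have heq : (fun i => (jrCBil n m k x y) i j) = ∑ h, y h j • x h := by
      funext i
      simp [jrCBil_apply, Finset.sum_apply, mul_comm]
    have : (fun i => (jrCBil n m k x y) i j) ∈ S := by
      rw [heq]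
      exact Submodule.sum_mem _ fun h _ => Submodule.smul_mem _ _ (hx ⟨h, rfl⟩)
    exact this
  -- range of the derivative is inside V1 ⊔ V2
  have hrange : LinearMap.range
      (((jrCBil n m k).isBoundedBilinearMap.deriv p)).toLinearMap ≤ V1 ⊔ V2 := by
    rintro A ⟨q, rfl⟩
    have : ((jrCBil n m k).isBoundedBilinearMap.deriv p) q
        = jrCBil n m k p.1 q.2 + jrCBil n m k q.1 p.2 :=
      (jrCBil n m k).isBoundedBilinearMap.deriv_apply p q
    show ((jrCBil n m k).isBoundedBilinearMap.deriv p) q ∈ V1 ⊔ V2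
    rw [this]
    exact Submodule.add_mem _
      (Submodule.mem_sup_right (memV2 p.1 q.2 (Submodule.subset_span)))
      (Submodule.mem_sup_left (memV1 q.1 p.2 (Submodule.subset_span)))
  -- dimensions
  set r := Module.finrank ℝ R with hr
  set s := Module.finrank ℝ S with hs
  have hrk : r ≤ k := by
    rw [hr, hR]
    simpa [Set.finrank] using finrank_range_le_card (R := ℝ) p.2
  have hsk : s ≤ k := by
    rw [hs, hS]
    simpa [Set.finrank] using finrank_range_le_card (R := ℝ) p.1
  have hdV1 : Module.finrank ℝ V1 = n * r := by
    rw [hV1, jrFinrankPi, Fintype.card_fin]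
  have hdV2 : Module.finrank ℝ V2 = m * s := by
    have : V2 = Submodule.map (((jrFlip n m).symm : (Fin m → Fin n → ℝ) →ₗ[ℝ] _))
        (Submodule.pi Set.univ (fun _ : Fin m => S)) := by
      rw [hV2, Submodule.comap_equiv_eq_map_symm]
    rw [this, LinearEquiv.finrank_map_eq, jrFinrankPi, Fintype.card_fin]
  -- lower bound on the intersection
  have hinf : s * r ≤ Module.finrank ℝ ↥(V1 ⊓ V2) := by
    let bR := Module.finBasis ℝ ↥R
    let bS := Module.finBasis ℝ ↥S
    have hbR : LinearIndependent ℝ (fun a => ((bR a : ↥R) : Fin m → ℝ)) :=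
      bR.linearIndependent.map' R.subtype (Submodule.ker_subtype R)
    have hbS : LinearIndependent ℝ (fun t => ((bS t : ↥S) : Fin n → ℝ)) :=
      bS.linearIndependent.map' S.subtype (Submodule.ker_subtype S)
    let Φ : (Fin s → Fin r → ℝ) →ₗ[ℝ] (Fin n → Fin m → ℝ) :=
      { toFun := fun C i j => ∑ t, ∑ a, C t a * ((bS t : Fin n → ℝ) i * (bR a : Fin m → ℝ) j)
        map_add' := by
          intro C D; funext i j; simp [add_mul, Finset.sum_add_distrib]
        map_smul' := by
          intro c C; funext i j; simp [Finset.mul_sum, mul_assoc] }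
    have hΦapp : ∀ C i j, Φ C i j = ∑ t, ∑ a, C t a * ((bS t : Fin n → ℝ) i * (bR a : Fin m → ℝ) j) :=
      fun C i j => rfl
    have hrowEq : ∀ C i, Φ C i = ∑ a, (∑ t, C t a * (bS t : Fin n → ℝ) i) • ((bR a : ↥R) : Fin m → ℝ) := by
      intro C i
      funext j
      rw [hΦapp]
      rw [Finset.sum_apply]
      rw [Finset.sum_comm]
      congr 1
      funext a
      simp [Finset.sum_mul, mul_assoc]
    have hcolEq : ∀ C j, (fun i => Φ C i j) = ∑ t, (∑ a, C t a * (bR a : Fin m → ℝ) j) • ((bS t : ↥S) : Fin n → ℝ) := by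
      intro C j
      funext i
      rw [hΦapp, Finset.sum_apply]
      congr 1
      funext t
      simp only [Pi.smul_apply, smul_eq_mul, Finset.sum_mul]
      exact Finset.sum_congr rfl fun a _ => by ring
    have hΦle : ∀ C, Φ C ∈ V1 ⊓ V2 := by
      intro C
      constructor
      · intro i _
        have : Φ C i ∈ R := by
          rw [hrowEq]
          exact Submodule.sum_mem _ fun a _ => Submodule.smul_mem _ _ (bR a).2
        exact this
      · intro j _
        have : (fun i => Φ C i j) ∈ S := by
          rw [hcolEq]
          exact Submodule.sum_mem _ fun t _ => Submodule.smul_mem _ _ (bS t).2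
        exact this
    have hinj : Function.Injective Φ := by
      rw [← LinearMap.ker_eq_bot, LinearMap.ker_eq_bot']
      intro C hC
      have h1 : ∀ i a, (∑ t, C t a * (bS t : Fin n → ℝ) i) = 0 := by
        intro i a
        have hrow : ∑ a', (∑ t, C t a' * (bS t : Fin n → ℝ) i) • ((bR a' : ↥R) : Fin m → ℝ)
            = (0 : Fin m → ℝ) := by
          rw [← hrowEq C i, hC]
          rfl
        exact Fintype.linearIndependent_iff.mp hbR _ hrow a
      funext t a
      have h2 : ∑ t', C t' a • ((bS t' : ↥S) : Fin n → ℝ) = (0 : Fin n → ℝ) := by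
        funext i
        rw [Finset.sum_apply]
        simpa [smul_eq_mul] using h1 i a
      exact Fintype.linearIndependent_iff.mp hbS _ h2 t
    have : s * r = Module.finrank ℝ (Fin s → Fin r → ℝ) := by
      rw [Module.finrank_pi_fintype, Finset.sum_const, Finset.card_univ, Fintype.card_fin,
        smul_eq_mul, Module.finrank_pi, Fintype.card_fin]
    rw [this]
    exact LinearMap.finrank_le_finrank_of_injective
      (f := Φ.codRestrict (V1 ⊓ V2) hΦle)
      (fun C D hCD => hinj (congrArg Subtype.val hCD))
  have hsum := Submodule.finrank_sup_add_finrank_inf_eq V1 V2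
  rw [hdV1, hdV2] at hsum
  have h1 : Module.finrank ℝ (LinearMap.range
      (((jrCBil n m k).isBoundedBilinearMap.deriv p)).toLinearMap) ≤
      Module.finrank ℝ ↥(V1 ⊔ V2) := Submodule.finrank_mono hrange
  have h2 : Module.finrank ℝ ↥(V1 ⊔ V2) + s * r ≤ n * r + m * s := by
    calc Module.finrank ℝ ↥(V1 ⊔ V2) + s * r
        ≤ Module.finrank ℝ ↥(V1 ⊔ V2) + Module.finrank ℝ ↥(V1 ⊓ V2) :=
          Nat.add_le_add_left hinf _
      _ = n * r + m * s := hsum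
  -- arithmetic
  have harith := jrArith hkn hkm hrk hsk
  omega
end

section
/- Let P be a nonnegative n×m matrix with rk₊(P) = k, and suppose P = Σ_{h=1}^k x_h·(y_h)ᵀ where all vectors x_h ∈ ℝⁿ, y_h ∈ ℝᵐ have strictly positive entries and the Jacobian of the dyadic parametrization f at this point has maximal rank k(n+m−k). Then there exists ε > 0 such that every nonnegative matrix N with ‖N − P‖_F < ε and rank(N) = rank(P) satisfies rk₊(N) = rk₊(P). -/
/-!
Near `P`, nonnegative rank can only go up: matrices admitting a nonnegative factorization through
`k - 1` form a closed set, because after normalizing every column factor into `[0, 1]` the row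
factors are bounded by the column sums, so locally the set is the image of a compact set.

For the reverse inequality, every matrix in the range of the Jacobian at `(x, y)` maps `y^⊥` into
`span x`, and its transpose maps `x^⊥` into `span y`. Counting dimensions, maximal rank then forces
both families to be linearly independent as soon as `k < n` and `k < m` (otherwise the bound
`rk₊ N ≤ min n m` is trivial). So `P = X Y` with `X`, `Y` of rank `k`. For `N` of rank at most `k`
near `P`, the matrices `A = N Yᵀ (Y Yᵀ)⁻¹` and `B = (Aᵀ A)⁻¹ Aᵀ N` satisfy `N = A B`. They depend
continuously on `N` and equal `X` and `Y` at `N = P`, so they stay positive.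
-/

open Matrix BigOperators Filter Topology

theorem Matrix.sum_vecMulVec_eq_mul {ι m n α : Type*} [Fintype ι] [NonUnitalNonAssocSemiring α]
    (c : ι → m → α) (r : ι → n → α) :
    ∑ h, vecMulVec (c h) (r h) = (of c)ᵀ * of r := by
  ext i j
  simp [Matrix.sum_apply, vecMulVec_apply, mul_apply]

def HasNonnegDecomp {n m : ℕ} (P : Matrix (Fin n) (Fin m) ℝ) (k : ℕ) : Prop :=
  ∃ (c : Fin k → Fin n → ℝ) (r : Fin k → Fin m → ℝ),
    (∀ h i, 0 ≤ c h i) ∧ (∀ h j, 0 ≤ r h j) ∧ P = ∑ h, vecMulVec (c h) (r h)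

section HasNonnegDecomp

variable {n m k : ℕ} {P : Matrix (Fin n) (Fin m) ℝ}

theorem hasNonnegDecomp_iff :
    HasNonnegDecomp P k ↔ ∃ (A : Matrix (Fin n) (Fin k) ℝ) (B : Matrix (Fin k) (Fin m) ℝ),
      (∀ i h, 0 ≤ A i h) ∧ (∀ h j, 0 ≤ B h j) ∧ P = A * B := by
  simp only [HasNonnegDecomp, sum_vecMulVec_eq_mul]
  constructor
  · rintro ⟨c, r, hc, hr, rfl⟩
    exact ⟨(of c)ᵀ, of r, fun i h => hc h i, hr, rfl⟩
  · rintro ⟨A, B, hA, hB, rfl⟩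
    exact ⟨Aᵀ, B, fun h i => hA i h, hB, rfl⟩

theorem HasNonnegDecomp.succ (hP : HasNonnegDecomp P k) : HasNonnegDecomp P (k + 1) := by
  obtain ⟨c, r, hc, hr, rfl⟩ := hP
  refine ⟨Fin.cons 0 c, Fin.cons 0 r, ?_, ?_, by simp [Fin.sum_univ_succ]⟩
  · exact Fin.cases (fun _ => le_rfl) hc
  · exact Fin.cases (fun _ => le_rfl) hr

theorem HasNonnegDecomp.mono {l : ℕ} (hP : HasNonnegDecomp P k) (hkl : k ≤ l) :
    HasNonnegDecomp P l := by
  induction l, hkl using Nat.le_induction with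
  | base => exact hP
  | succ l _ ih => exact ih.succ

theorem hasNonnegDecomp_height (hP : ∀ i j, 0 ≤ P i j) : HasNonnegDecomp P n :=
  hasNonnegDecomp_iff.2 ⟨1, P, fun _ _ => zero_le_one_elem .., hP, (Matrix.one_mul P).symm⟩

theorem hasNonnegDecomp_width (hP : ∀ i j, 0 ≤ P i j) : HasNonnegDecomp P m :=
  hasNonnegDecomp_iff.2 ⟨P, 1, hP, fun _ _ => zero_le_one_elem .., (Matrix.mul_one P).symm⟩

theorem HasNonnegDecomp.nnRank_le (hP : HasNonnegDecomp P k) : nnRank P ≤ k :=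
  Nat.sInf_le hP

theorem hasNonnegDecomp_nnRank (hP : ∀ i j, 0 ≤ P i j) : HasNonnegDecomp P (nnRank P) :=
  Nat.sInf_mem (s := {k | HasNonnegDecomp P k}) ⟨n, hasNonnegDecomp_height hP⟩

theorem HasNonnegDecomp.exists_bounded (hP : HasNonnegDecomp P k) :
    ∃ (c : Fin k → Fin n → ℝ) (r : Fin k → Fin m → ℝ),
      (∀ h i, 0 ≤ c h i ∧ c h i ≤ 1) ∧ (∀ h j, 0 ≤ r h j ∧ r h j ≤ ∑ i, P i j) ∧
      P = ∑ h, vecMulVec (c h) (r h) := by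
  obtain ⟨c, r, hc, hr, rfl⟩ := hP
  set s : Fin k → ℝ := fun h => ∑ i, c h i
  have hs : ∀ h, 0 ≤ s h := fun h => Finset.sum_nonneg fun i _ => hc h i
  have hcs : ∀ h i, c h i ≤ s h := fun h i =>
    Finset.single_le_sum (fun i _ => hc h i) (Finset.mem_univ i)
  have hdyad : ∀ h, vecMulVec ((s h)⁻¹ • c h) (s h • r h) = vecMulVec (c h) (r h) := by
    intro h
    ext i j
    by_cases hsh : s h = 0
    · have : c h i = 0 := le_antisymm (hsh ▸ hcs h i) (hc h i)
      simp [vecMulVec_apply, this, hsh]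
    · simp only [vecMulVec_apply, Pi.smul_apply, smul_eq_mul]
      field_simp
  refine ⟨fun h => (s h)⁻¹ • c h, fun h => s h • r h, fun h i => ?_, fun h j => ?_,
    by simp only [hdyad]⟩
  · simp only [Pi.smul_apply, smul_eq_mul, inv_mul_eq_div]
    exact ⟨div_nonneg (hc h i) (hs h), div_le_one_of_le₀ (hcs h i) (hs h)⟩
  · refine ⟨mul_nonneg (hs h) (hr h j), ?_⟩
    simp only [Pi.smul_apply, smul_eq_mul, s, Finset.sum_mul, Matrix.sum_apply, vecMulVec_apply]
    refine Finset.sum_le_sum fun i _ => ?_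
    exact Finset.single_le_sum (f := fun h' => c h' i * r h' j)
      (fun h' _ => mul_nonneg (hc h' i) (hr h' j)) (Finset.mem_univ h)

end HasNonnegDecomp

theorem isClosed_setOf_hasNonnegDecomp (n m k : ℕ) :
    IsClosed {P : Matrix (Fin n) (Fin m) ℝ | HasNonnegDecomp P k} := by
  refine isClosed_of_closure_subset fun P hP => ?_
  obtain ⟨B, hB⟩ := (Set.finite_range fun j => ∑ i, P i j).bddAbove
  set O := {N : Matrix (Fin n) (Fin m) ℝ | ∀ j, ∑ i, N i j < B + 1}
  have hO : IsOpen O := by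
    simp only [O, Set.ofPred_forall]
    exact isOpen_iInter_of_finite fun j => isOpen_lt (by fun_prop) continuous_const
  set T := (fun q : (Fin k → Fin n → ℝ) × (Fin k → Fin m → ℝ) => ∑ h, vecMulVec (q.1 h) (q.2 h)) ''
    (Set.Icc 0 1 ×ˢ Set.Icc 0 fun _ _ => B + 1)
  have hT : IsClosed T :=
    ((isCompact_Icc.prod isCompact_Icc).image (by fun_prop)).isClosed
  have hOT : O ∩ {N | HasNonnegDecomp N k} ⊆ T := by
    rintro N ⟨hNO, hN⟩
    obtain ⟨c, r, hc, hr, rfl⟩ := hN.exists_bounded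
    refine ⟨(c, r), ⟨?_, ?_⟩, rfl⟩ <;> simp only [Set.mem_Icc, Pi.le_def]
    · exact ⟨fun h i => (hc h i).1, fun h i => (hc h i).2⟩
    · exact ⟨fun h j => (hr h j).1, fun h j => (hr h j).2.trans (hNO j).le⟩
  have hTP : P ∈ T := closure_minimal hOT hT
    (hO.inter_closure ⟨fun j => (hB ⟨j, rfl⟩).trans_lt (lt_add_one B), hP⟩)
  obtain ⟨⟨c, r⟩, ⟨⟨hc, -⟩, ⟨hr, -⟩⟩, rfl⟩ := hTP
  exact ⟨c, r, fun h i => hc h i, fun h j => hr h j, rfl⟩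

theorem eventually_nnRank_le_nnRank {n m : ℕ} (P : Matrix (Fin n) (Fin m) ℝ) :
    ∀ᶠ N in 𝓝 P, (∀ i j, 0 ≤ N i j) → nnRank P ≤ nnRank N := by
  rcases Nat.eq_zero_or_pos (nnRank P) with h0 | hpos
  · exact .of_forall fun N _ => h0 ▸ Nat.zero_le _
  have hP : P ∈ {N | HasNonnegDecomp N (nnRank P - 1)}ᶜ := fun h => by
    have := h.nnRank_le
    omega
  filter_upwards [(isClosed_setOf_hasNonnegDecomp n m _).isOpen_compl.mem_nhds hP] with N hN hNnn
  by_contra! hlt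
  exact hN ((hasNonnegDecomp_nnRank hNnn).mono (by omega))

theorem abs_sub_le_frobDist {n m : ℕ} (P N : Matrix (Fin n) (Fin m) ℝ) (i : Fin n) (j : Fin m) :
    |P i j - N i j| ≤ frobDist P N := by
  rw [← Real.sqrt_sq_eq_abs]
  refine Real.sqrt_le_sqrt ?_
  calc (P i j - N i j) ^ 2 ≤ ∑ j', (P i j' - N i j') ^ 2 :=
        Finset.single_le_sum (f := fun j' => (P i j' - N i j') ^ 2)
          (fun _ _ => sq_nonneg _) (Finset.mem_univ j)
    _ ≤ ∑ i', ∑ j', (P i' j' - N i' j') ^ 2 :=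
        Finset.single_le_sum (f := fun i' => ∑ j', (P i' j' - N i' j') ^ 2)
          (fun _ _ => Finset.sum_nonneg fun _ _ => sq_nonneg _) (Finset.mem_univ i)

theorem exists_pos_forall_frobDist_lt_mem {n m : ℕ} {P : Matrix (Fin n) (Fin m) ℝ}
    {S : Set (Matrix (Fin n) (Fin m) ℝ)} (hS : S ∈ 𝓝 P) :
    ∃ ε > 0, ∀ N, frobDist N P < ε → N ∈ S := by
  obtain ⟨ε, hε, hball⟩ := (Metric.mem_nhds_iff (α := Fin n → Fin m → ℝ)).1 hS
  refine ⟨ε, hε, fun N hN => hball <| (dist_pi_lt_iff hε).2 fun i => (dist_pi_lt_iff hε).2 fun j =>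
    (abs_sub_le_frobDist N P i j).trans_lt hN⟩

namespace Matrix

section Field

variable {K : Type*} [Field K] {m n k : Type*} [Fintype n] [Fintype k]

theorem isUnit_of_rank_eq_card [DecidableEq k] {A : Matrix k k K}
    (hA : A.rank = Fintype.card k) : IsUnit A := by
  rw [← mulVec_surjective_iff_isUnit]
  refine (LinearMap.range_eq_top (f := A.mulVecLin)).1 (Submodule.eq_top_of_finrank_eq ?_)
  rwa [Module.finrank_fintype_fun_eq_card]

theorem exists_eq_mul_of_rank_le {A : Matrix m k K} {N : Matrix m n K} {D : Matrix n k K}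
    (hA : A = N * D) (hrank : N.rank ≤ A.rank) : ∃ C : Matrix k n K, N = A * C := by
  classical
  have hrange : LinearMap.range A.mulVecLin = LinearMap.range N.mulVecLin := by
    refine Submodule.eq_of_le_of_finrank_le ?_ hrank
    rw [hA, mulVecLin_mul]
    exact LinearMap.range_comp_le_range _ _
  have hcol (j : n) : N *ᵥ Pi.single j 1 ∈ LinearMap.range A.mulVecLin :=
    hrange ▸ LinearMap.mem_range_self N.mulVecLin _
  choose c hc using hcol
  refine ⟨(of c)ᵀ, ?_⟩
  ext i j
  have := congrFun (hc j) i
  simp only [mulVecLin_apply, mulVec_single, MulOpposite.op_one, one_smul] at this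
  exact this.symm

end Field

theorem isUnit_transpose_mul_self_of_rank_eq {m k : Type*} [Fintype m] [Fintype k] [DecidableEq k]
    {A : Matrix m k ℝ} (hA : A.rank = Fintype.card k) : IsUnit (Aᵀ * A) :=
  isUnit_of_rank_eq_card (by rwa [rank_transpose_mul_self])

theorem mul_inv_transpose_mul_self_mul_eq {R m n k : Type*} [CommRing R] [Fintype m] [Fintype k]
    [DecidableEq k] {A : Matrix m k R} {N : Matrix m n R} {C : Matrix k n R}
    (hA : IsUnit (Aᵀ * A).det) (hN : N = A * C) : A * ((Aᵀ * A)⁻¹ * Aᵀ * N) = N := by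
  subst hN
  rw [Matrix.mul_assoc _ Aᵀ, ← Matrix.mul_assoc Aᵀ, ← Matrix.mul_assoc _ (Aᵀ * A),
    nonsing_inv_mul _ hA, Matrix.one_mul]

theorem _root_.ContinuousAt.eventually_forall_pos {α m n : Type*} [TopologicalSpace α] [Finite m]
    [Finite n] {f : α → Matrix m n ℝ} {x : α} (hf : ContinuousAt f x) (hx : ∀ i j, 0 < f x i j) :
    ∀ᶠ y in 𝓝 x, ∀ i j, 0 < f y i j :=
  eventually_all.2 fun i => eventually_all.2 fun j =>
    ((continuous_id.matrix_elem i j).continuousAt.comp hf).eventually (eventually_gt_nhds (hx i j))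

section Factors

variable {m n k : Type*} [Fintype n] [Fintype k] [DecidableEq k]

/-- With `Y` of full row rank, `N ↦ N Yᵀ (Y Yᵀ)⁻¹` recovers the left factor of `N = X Y`. -/
noncomputable def leftFactor (Y : Matrix k n ℝ) (N : Matrix m n ℝ) : Matrix m k ℝ :=
  N * Yᵀ * (Y * Yᵀ)⁻¹

/-- The least-squares solution `B` of `leftFactor Y N * B = N`. -/
noncomputable def rightFactor [Fintype m] (Y : Matrix k n ℝ) (N : Matrix m n ℝ) : Matrix k n ℝ :=
  ((leftFactor Y N)ᵀ * leftFactor Y N)⁻¹ * (leftFactor Y N)ᵀ * N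

theorem leftFactor_mul {X : Matrix m k ℝ} {Y : Matrix k n ℝ} (hY : IsUnit (Y * Yᵀ).det) :
    leftFactor Y (X * Y) = X := by
  rw [leftFactor, Matrix.mul_assoc X Y, Matrix.mul_assoc X, mul_nonsing_inv _ hY, Matrix.mul_one]

theorem continuous_leftFactor (Y : Matrix k n ℝ) :
    Continuous (leftFactor Y : Matrix m n ℝ → Matrix m k ℝ) :=
  (continuous_id.matrix_mul continuous_const).matrix_mul continuous_const

variable [Fintype m]

theorem rightFactor_mul {X : Matrix m k ℝ} {Y : Matrix k n ℝ} (hX : IsUnit (Xᵀ * X).det)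
    (hY : IsUnit (Y * Yᵀ).det) : rightFactor Y (X * Y) = Y := by
  rw [rightFactor, leftFactor_mul hY, Matrix.mul_assoc _ Xᵀ, ← Matrix.mul_assoc Xᵀ,
    ← Matrix.mul_assoc, nonsing_inv_mul _ hX, Matrix.one_mul]

theorem leftFactor_mul_rightFactor {Y : Matrix k n ℝ} {N : Matrix m n ℝ}
    (hG : IsUnit ((leftFactor Y N)ᵀ * leftFactor Y N).det) (hN : N.rank ≤ Fintype.card k) :
    leftFactor Y N * rightFactor Y N = N := by
  have hrank : (leftFactor Y N).rank = Fintype.card k := by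
    rw [← rank_transpose_mul_self, rank_of_isUnit _ ((isUnit_iff_isUnit_det _).2 hG)]
  obtain ⟨C, hC⟩ := exists_eq_mul_of_rank_le (Matrix.mul_assoc N _ _) (hrank ▸ hN)
  exact mul_inv_transpose_mul_self_mul_eq hG hC

theorem continuousAt_rightFactor {Y : Matrix k n ℝ} {N : Matrix m n ℝ}
    (hG : IsUnit ((leftFactor Y N)ᵀ * leftFactor Y N).det) : ContinuousAt (rightFactor Y) N := by
  have hL := continuous_leftFactor (m := m) Y
  have hinv : ContinuousAt (fun N => ((leftFactor Y N)ᵀ * leftFactor Y N)⁻¹) N := by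
    refine (continuousAt_matrix_inv _ ?_).comp (hL.matrix_transpose.matrix_mul hL).continuousAt
    rw [Ring.inverse_eq_inv']
    exact continuousAt_inv₀ hG.ne_zero
  have hmul : Continuous fun p : Matrix k k ℝ × Matrix m n ℝ => p.1 * (leftFactor Y p.2)ᵀ * p.2 :=
    (continuous_fst.matrix_mul (hL.comp continuous_snd).matrix_transpose).matrix_mul continuous_snd
  exact hmul.continuousAt.comp (f := fun N => (((leftFactor Y N)ᵀ * leftFactor Y N)⁻¹, N))
    (hinv.prodMk continuousAt_id)

theorem eventually_exists_pos_mul_eq {X : Matrix m k ℝ} {Y : Matrix k n ℝ}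
    (hX : ∀ i h, 0 < X i h) (hY : ∀ h j, 0 < Y h j)
    (hXrank : X.rank = Fintype.card k) (hYrank : Y.rank = Fintype.card k) :
    ∀ᶠ N in 𝓝 (X * Y), N.rank ≤ Fintype.card k →
      ∃ (A : Matrix m k ℝ) (B : Matrix k n ℝ), (∀ i h, 0 < A i h) ∧ (∀ h j, 0 < B h j) ∧
        N = A * B := by
  have hGX : IsUnit (Xᵀ * X).det :=
    (isUnit_iff_isUnit_det _).1 (isUnit_transpose_mul_self_of_rank_eq hXrank)
  have hGY : IsUnit (Y * Yᵀ).det := by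
    have := isUnit_transpose_mul_self_of_rank_eq (A := Yᵀ) (by rwa [rank_transpose])
    rwa [transpose_transpose, isUnit_iff_isUnit_det] at this
  have hL := continuous_leftFactor (m := m) Y
  have hGram : ∀ᶠ N in 𝓝 (X * Y), IsUnit ((leftFactor Y N)ᵀ * leftFactor Y N).det := by
    refine (((hL.matrix_transpose.matrix_mul hL).matrix_det).continuousAt.eventually_ne ?_).mono
      fun N hN => isUnit_iff_ne_zero.2 hN
    rw [leftFactor_mul hGY]
    exact hGX.ne_zero
  have hLpos := hL.continuousAt.eventually_forall_pos (x := X * Y) (by rwa [leftFactor_mul hGY])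
  have hRpos := (continuousAt_rightFactor hGram.self_of_nhds).eventually_forall_pos
    (by rwa [rightFactor_mul hGX hGY])
  filter_upwards [hGram, hLpos, hRpos] with N hG hA hB hN
  exact ⟨_, _, hA, hB, (leftFactor_mul_rightFactor hG hN).symm⟩

end Factors

theorem sum_vecMulVec_add_mulVec_mem_span {R ι m n : Type*} [CommSemiring R] [Fintype ι]
    [Fintype m] (u a : ι → n → R) (v b : ι → m → R) (w : m → R) (hw : ∀ h, v h ⬝ᵥ w = 0) :
    (∑ h, (vecMulVec (a h) (v h) + vecMulVec (u h) (b h))) *ᵥ w ∈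
      Submodule.span R (Set.range u) := by
  rw [sum_mulVec]
  refine Submodule.sum_mem _ fun h _ => ?_
  rw [add_mulVec, vecMulVec_mulVec, vecMulVec_mulVec, hw h, MulOpposite.op_zero, zero_smul,
    zero_add, op_smul_eq_smul]
  exact Submodule.smul_mem _ _ (Submodule.subset_span (Set.mem_range_self h))

end Matrix

theorem finrank_add_finrank_mul_finrank_quotient_le {K V W : Type*} [Field K] [AddCommGroup V]
    [Module K V] [FiniteDimensional K V] [AddCommGroup W] [Module K W] [FiniteDimensional K W]
    (Z : Submodule K V) (U : Submodule K W) (S : Submodule K (V →ₗ[K] W))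
    (hS : ∀ f ∈ S, ∀ z ∈ Z, f z ∈ U) :
    Module.finrank K S + Module.finrank K Z * Module.finrank K (W ⧸ U) ≤
      Module.finrank K V * Module.finrank K W := by
  let Θ : (V →ₗ[K] W) →ₗ[K] (Z →ₗ[K] W ⧸ U) :=
    LinearMap.lcomp K (W ⧸ U) Z.subtype ∘ₗ LinearMap.compRight K U.mkQ
  have hΘ : Function.Surjective Θ := by
    obtain ⟨r, hr⟩ := Z.subtype.exists_leftInverse_of_injective Z.ker_subtype
    obtain ⟨s, hs⟩ := U.mkQ.exists_rightInverse_of_surjective U.range_mkQ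
    refine fun g => ⟨s ∘ₗ g ∘ₗ r, ?_⟩
    ext z
    have hrz : r z = z := LinearMap.congr_fun hr z
    have hsg : U.mkQ (s (g z)) = g z := LinearMap.congr_fun hs (g z)
    simpa [Θ, hrz] using hsg
  have hSker : S ≤ LinearMap.ker Θ := fun f hf => by
    ext z
    simpa [Θ] using hS f hf z z.2
  have := LinearMap.finrank_range_add_finrank_ker Θ
  rw [LinearMap.range_eq_top.2 hΘ, finrank_top, Module.finrank_linearMap,
    Module.finrank_linearMap] at this
  have := Submodule.finrank_mono hSker
  omega

theorem finrank_span_eq_of_forall_mulVec_mem {n m k : ℕ} (x : Fin k → Fin n → ℝ)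
    (y : Fin k → Fin m → ℝ) (S : Submodule ℝ (Matrix (Fin n) (Fin m) ℝ))
    (hS : ∀ M ∈ S, ∀ w, (∀ h, y h ⬝ᵥ w = 0) → M *ᵥ w ∈ Submodule.span ℝ (Set.range x))
    (hkn : k ≤ n) (hkm : k < m) (hSdim : k * (n + m - k) ≤ Module.finrank ℝ S) :
    Module.finrank ℝ (Submodule.span ℝ (Set.range x)) = k := by
  have hbound := finrank_add_finrank_mul_finrank_quotient_le (LinearMap.ker (of y).mulVecLin)
    (Submodule.span ℝ (Set.range x)) (S.map toLin'.toLinearMap)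
    (by
      rintro _ ⟨M, hM, rfl⟩ w hw
      exact hS M hM w fun h => congrFun hw h)
  rw [LinearEquiv.finrank_map_eq, Submodule.finrank_quotient] at hbound
  simp only [Module.finrank_fin_fun] at hbound
  have hker : m - k ≤ Module.finrank ℝ (LinearMap.ker (of y).mulVecLin) := by
    have := LinearMap.finrank_range_add_finrank_ker (of y).mulVecLin
    have := Submodule.finrank_le (LinearMap.range (of y).mulVecLin)
    simp only [Module.finrank_fin_fun] at *
    omega
  have hspan : Module.finrank ℝ (Submodule.span ℝ (Set.range x)) ≤ k := by
    simpa [Set.finrank] using finrank_range_le_card (R := ℝ) x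
  set u := Module.finrank ℝ (Submodule.span ℝ (Set.range x))
  -- with `n = k + p` and `m = k + q + 1`, a defect `u < k` costs at least `q + 1` dimensions
  obtain ⟨p, rfl⟩ : ∃ p, n = k + p := ⟨n - k, by omega⟩
  obtain ⟨q, rfl⟩ : ∃ q, m = k + q + 1 := ⟨m - k - 1, by omega⟩
  by_contra hu
  have h1 : k * (k + p + (k + q + 1) - k) = k * (k + p + q + 1) := by congr 1; omega
  have h2 : (q + 1) * (p + 1) ≤ Module.finrank ℝ (LinearMap.ker (of y).mulVecLin) * (k + p - u) :=
    Nat.mul_le_mul (by omega) (by omega)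
  nlinarith

def dyadicParam {k n m : ℕ} (q : (Fin k → Fin n → ℝ) × (Fin k → Fin m → ℝ)) :
    Fin n → Fin m → ℝ :=
  fun i j => ∑ h, q.1 h i * q.2 h j

section DyadicParam

variable {k n m : ℕ} (x : Fin k → Fin n → ℝ) (y : Fin k → Fin m → ℝ)

theorem fderiv_dyadicParam_apply (a : Fin k → Fin n → ℝ) (b : Fin k → Fin m → ℝ) :
    fderiv ℝ dyadicParam (x, y) (a, b) = ∑ h, (vecMulVec (a h) (y h) + vecMulVec (x h) (b h)) := by
  have hentry (h : Fin k) (i : Fin n) (j : Fin m) :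
      fderiv ℝ (fun q : (Fin k → Fin n → ℝ) × (Fin k → Fin m → ℝ) => q.1 h i * q.2 h j) (x, y)
        (a, b) = a h i * y h j + x h i * b h j := by
    have hfst := ((ContinuousLinearMap.proj i).comp ((ContinuousLinearMap.proj h).comp
      (ContinuousLinearMap.fst ℝ (Fin k → Fin n → ℝ) (Fin k → Fin m → ℝ)))).hasFDerivAt
      (x := (x, y))
    have hsnd := ((ContinuousLinearMap.proj j).comp ((ContinuousLinearMap.proj h).comp
      (ContinuousLinearMap.snd ℝ (Fin k → Fin n → ℝ) (Fin k → Fin m → ℝ)))).hasFDerivAt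
      (x := (x, y))
    refine (DFunLike.congr_fun (hfst.fun_mul hsnd).fderiv (a, b)).trans ?_
    simp [add_comm, mul_comm]
  ext i j
  unfold dyadicParam
  rw [fderiv_pi (fun i => by fun_prop), ContinuousLinearMap.pi_apply,
    fderiv_pi (fun j => by fun_prop), ContinuousLinearMap.pi_apply,
    fderiv_fun_sum (fun h _ => by fun_prop)]
  simp [hentry, Matrix.sum_apply, vecMulVec_apply]

theorem rank_eq_of_finrank_range_fderiv_dyadicParam (hkn : k < n) (hkm : k < m)
    (hjac : Module.finrank ℝ (LinearMap.range (fderiv ℝ dyadicParam (x, y)).toLinearMap) =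
      k * (n + m - k)) :
    (of x).rank = k ∧ (of y).rank = k := by
  set S := LinearMap.range (fderiv ℝ dyadicParam (x, y)).toLinearMap
  have hS : ∀ M ∈ S, ∃ (a : Fin k → Fin n → ℝ) (b : Fin k → Fin m → ℝ),
      M = ∑ h, (vecMulVec (a h) (y h) + vecMulVec (x h) (b h)) := by
    rintro _ ⟨⟨a, b⟩, rfl⟩
    exact ⟨a, b, fderiv_dyadicParam_apply x y a b⟩
  rw [rank_eq_finrank_span_row, rank_eq_finrank_span_row]
  constructor
  · refine finrank_span_eq_of_forall_mulVec_mem x y S (fun M hM w hw => ?_) hkn.le hkm hjac.ge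
    obtain ⟨a, b, rfl⟩ := hS M hM
    exact sum_vecMulVec_add_mulVec_mem_span x a y b w hw
  · refine finrank_span_eq_of_forall_mulVec_mem y x
      (S.map (transposeLinearEquiv (Fin n) (Fin m) ℝ ℝ).toLinearMap)
      (fun _ hM w hw => ?_) hkm.le hkn ?_
    · obtain ⟨M, hM, rfl⟩ := hM
      obtain ⟨a, b, rfl⟩ := hS M hM
      change (∑ h, (vecMulVec (a h) (y h) + vecMulVec (x h) (b h)))ᵀ *ᵥ w ∈ _
      simp only [transpose_sum, transpose_add, transpose_vecMulVec, add_comm (vecMulVec (y _) _)]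
      exact sum_vecMulVec_add_mulVec_mem_span y b x a w hw
    · rw [add_comm m n]
      exact hjac.ge.trans
        (LinearEquiv.finrank_map_eq (transposeLinearEquiv (Fin n) (Fin m) ℝ ℝ) S).ge

end DyadicParam

theorem isorank_perturbation {n m k : ℕ} (P : Matrix (Fin n) (Fin m) ℝ)
    (hP : ∀ i j, 0 ≤ P i j) (hk : nnRank P = k)
    (x : Fin k → Fin n → ℝ) (y : Fin k → Fin m → ℝ)
    (hx : ∀ h i, 0 < x h i) (hy : ∀ h j, 0 < y h j)
    (hdec : P = ∑ h, Matrix.vecMulVec (x h) (y h))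
    (hjac : Module.finrank ℝ
      (LinearMap.range
        ((fderiv ℝ
          (fun q : (Fin k → (Fin n → ℝ)) × (Fin k → (Fin m → ℝ)) =>
            fun i j => ∑ h, q.1 h i * q.2 h j) (x, y))).toLinearMap) =
      k * (n + m - k)) :
    ∃ ε > (0 : ℝ), ∀ N : Matrix (Fin n) (Fin m) ℝ,
      (∀ i j, 0 ≤ N i j) → frobDist N P < ε →
      N.rank = P.rank → nnRank N = nnRank P := by
  have hkn : k ≤ n := hk ▸ (hasNonnegDecomp_height hP).nnRank_le
  have hkm : k ≤ m := hk ▸ (hasNonnegDecomp_width hP).nnRank_le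
  have hupper : ∀ᶠ N in 𝓝 P, (∀ i j, 0 ≤ N i j) → N.rank = P.rank → nnRank N ≤ k := by
    rcases hkn.lt_or_eq with hkn | rfl
    · rcases hkm.lt_or_eq with hkm | rfl
      · obtain ⟨hxrank, hyrank⟩ := rank_eq_of_finrank_range_fderiv_dyadicParam x y hkn hkm hjac
        rw [hdec, sum_vecMulVec_eq_mul]
        filter_upwards [eventually_exists_pos_mul_eq (fun i h => hx h i) hy
          (by rw [rank_transpose, hxrank, Fintype.card_fin]) (by rw [hyrank, Fintype.card_fin])]
          with N hN _ hNrank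
        obtain ⟨A, B, hA, hB, rfl⟩ := hN <| by
          rw [hNrank, Fintype.card_fin]
          exact (rank_mul_le_right _ _).trans (rank_le_height _)
        exact (hasNonnegDecomp_iff.2
          ⟨A, B, fun i h => (hA i h).le, fun h j => (hB h j).le, rfl⟩).nnRank_le
      · exact .of_forall fun N hN _ => (hasNonnegDecomp_width hN).nnRank_le
    · exact .of_forall fun N hN _ => (hasNonnegDecomp_height hN).nnRank_le
  obtain ⟨ε, hε, hball⟩ :=
    exists_pos_forall_frobDist_lt_mem ((eventually_nnRank_le_nnRank P).and hupper)
  refine ⟨ε, hε, fun N hN hNP hrank => ?_⟩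
  obtain ⟨hlow, hup⟩ := hball N hNP
  exact le_antisymm (hk ▸ hup hN hrank) (hlow hN)
end

section
/- Every nonnegative n×m real matrix P with min{n,m} ≤ 3 satisfies rk₊(P) = rank(P). -/
open Matrix BigOperators Filter Topology

namespace NNRankAux

open Submodule Module

/-- The "sum of coordinates" linear functional. -/
noncomputable def sumF (n : ℕ) : (Fin n → ℝ) →ₗ[ℝ] ℝ := ∑ i, LinearMap.proj i

lemma sumF_apply {n : ℕ} (x : Fin n → ℝ) : sumF n x = ∑ i, x i := by
  simp [sumF]

lemma sumF_pos {n : ℕ} {v : Fin n → ℝ} (hv : ∀ i, 0 ≤ v i) (h : v ≠ 0) :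
    0 < sumF n v := by
  rw [sumF_apply]
  rcases Function.ne_iff.1 h with ⟨i, hi⟩
  have hpos : 0 < v i := lt_of_le_of_ne (hv i) (Ne.symm (by simpa using hi))
  exact lt_of_lt_of_le hpos (Finset.single_le_sum (fun j _ => hv j) (Finset.mem_univ i))

lemma finrank_inf_ker {n m : ℕ} (v : Fin m → Fin n → ℝ) {j0 : Fin m}
    (h0 : v j0 ≠ 0) (hphi : sumF n (v j0) ≠ 0) :
    finrank ℝ ↥(span ℝ (Set.range v) ⊓ LinearMap.ker (sumF n)) + 1 ≤
      finrank ℝ ↥(span ℝ (Set.range v)) := by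
  set W := span ℝ (Set.range v) ⊓ LinearMap.ker (sumF n) with hW
  set S := span ℝ ({v j0} : Set (Fin n → ℝ)) with hS
  have hinf : W ⊓ S = ⊥ := by
    rw [eq_bot_iff]
    rintro x hx
    rcases Submodule.mem_inf.1 hx with ⟨hxW, hxS⟩
    rcases Submodule.mem_span_singleton.1 hxS with ⟨c, rfl⟩
    have hker : sumF n (c • v j0) = 0 := (Submodule.mem_inf.1 hxW).2
    rw [_root_.map_smul, smul_eq_mul] at hker
    rcases mul_eq_zero.1 hker with h | h
    · simp [h]
    · exact absurd h hphi
  have hsum := Submodule.finrank_sup_add_finrank_inf_eq W S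
  rw [hinf, finrank_bot, add_zero, finrank_span_singleton h0] at hsum
  have hle : W ⊔ S ≤ span ℝ (Set.range v) :=
    sup_le inf_le_left (span_le.2 (Set.singleton_subset_iff.2 (subset_span ⟨j0, rfl⟩)))
  calc finrank ℝ ↥W + 1 = finrank ℝ ↥(W ⊔ S) := hsum.symm
    _ ≤ finrank ℝ ↥(span ℝ (Set.range v)) := Submodule.finrank_mono hle

/-- Rank-one case: nonnegative vectors spanning a space of dimension ≤ 1 are all
nonnegative multiples of a single nonnegative vector. -/
lemma cone_rep1 {n m : ℕ} (v : Fin m → Fin n → ℝ) (hv : ∀ j i, 0 ≤ v j i)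
    (h1 : finrank ℝ ↥(span ℝ (Set.range v)) ≤ 1) :
    ∃ (u : Fin n → ℝ) (a : Fin m → ℝ), (∀ i, 0 ≤ u i) ∧ (∀ j, 0 ≤ a j) ∧
      ∀ j, v j = a j • u := by
  by_cases hall : ∀ j, v j = 0
  · exact ⟨0, 0, fun i => le_rfl, fun j => le_rfl, fun j => by simp [hall j]⟩
  push_neg at hall
  obtain ⟨j0, h0⟩ := hall
  have hphi0 : 0 < sumF n (v j0) := sumF_pos (hv j0) h0
  have hWbot : span ℝ (Set.range v) ⊓ LinearMap.ker (sumF n) = ⊥ := by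
    have hk := finrank_inf_ker v h0 (ne_of_gt hphi0)
    have : finrank ℝ ↥(span ℝ (Set.range v) ⊓ LinearMap.ker (sumF n)) = 0 := by omega
    exact Submodule.finrank_eq_zero.1 this
  refine ⟨(sumF n (v j0))⁻¹ • v j0, fun j => sumF n (v j), ?_, ?_, ?_⟩
  · intro i
    exact mul_nonneg (inv_nonneg.2 hphi0.le) (hv j0 i)
  · intro j
    simpa [sumF_apply] using Finset.sum_nonneg fun i _ => hv j i
  · intro j
    set x : Fin n → ℝ := sumF n (v j0) • v j - sumF n (v j) • v j0 with hx
    have hxW : x ∈ span ℝ (Set.range v) ⊓ LinearMap.ker (sumF n) := by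
      refine Submodule.mem_inf.2 ⟨?_, ?_⟩
      · exact sub_mem (smul_mem _ _ (subset_span ⟨j, rfl⟩))
          (smul_mem _ _ (subset_span ⟨j0, rfl⟩))
      · simp [hx, LinearMap.mem_ker, map_sub, _root_.map_smul, smul_eq_mul, mul_comm]
    rw [hWbot, Submodule.mem_bot] at hxW
    have heq : sumF n (v j0) • v j = sumF n (v j) • v j0 := by
      have := sub_eq_zero.1 hxW
      exact this
    calc v j = (sumF n (v j0))⁻¹ • (sumF n (v j0) • v j) := by
          rw [smul_smul, inv_mul_cancel₀ (ne_of_gt hphi0), one_smul]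
      _ = (sumF n (v j0))⁻¹ • (sumF n (v j) • v j0) := by rw [heq]
      _ = sumF n (v j) • ((sumF n (v j0))⁻¹ • v j0) := by
          rw [smul_smul, smul_smul, mul_comm]

/-- Rank-two case (Cohen–Rothblum): nonnegative vectors spanning a space of dimension ≤ 2
are all nonnegative combinations of two nonnegative vectors. -/
lemma cone_rep2 {n m : ℕ} (v : Fin m → Fin n → ℝ) (hv : ∀ j i, 0 ≤ v j i)
    (h2 : finrank ℝ ↥(span ℝ (Set.range v)) ≤ 2) :
    ∃ (u w : Fin n → ℝ) (a b : Fin m → ℝ), (∀ i, 0 ≤ u i) ∧ (∀ i, 0 ≤ w i) ∧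
      (∀ j, 0 ≤ a j) ∧ (∀ j, 0 ≤ b j) ∧ ∀ j, v j = a j • u + b j • w := by
  classical
  by_cases hall : ∀ j, v j = 0
  · exact ⟨0, 0, 0, 0, fun i => le_rfl, fun i => le_rfl, fun j => le_rfl, fun j => le_rfl,
      fun j => by simp [hall j]⟩
  push_neg at hall
  obtain ⟨j0, h0⟩ := hall
  set φ : Fin m → ℝ := fun j => sumF n (v j) with hφ
  have hφnn : ∀ j, 0 ≤ φ j := fun j => by
    simpa [hφ, sumF_apply] using Finset.sum_nonneg fun i _ => hv j i
  have hφpos : ∀ j, v j ≠ 0 → 0 < φ j := fun j h => sumF_pos (hv j) h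
  set N : Fin m → Fin n → ℝ :=
    fun j => if v j = 0 then (φ j0)⁻¹ • v j0 else (φ j)⁻¹ • v j with hN
  have hNnn : ∀ j i, 0 ≤ N j i := by
    intro j i
    rw [hN]
    by_cases h : v j = 0
    · simp only [h, if_true]
      exact mul_nonneg (inv_nonneg.2 (hφnn j0)) (hv j0 i)
    · simp only [h, if_false]
      exact mul_nonneg (inv_nonneg.2 (hφnn j)) (hv j i)
  have hvN : ∀ j, v j = φ j • N j := by
    intro j
    by_cases h : v j = 0
    · have hz : φ j = 0 := by simp only [hφ]; rw [h, map_zero]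
      simp [h, hz]
    · rw [hN]
      simp only [h, if_false]
      rw [smul_smul, mul_inv_cancel₀ (ne_of_gt (hφpos j h)), one_smul]
  have hNsum : ∀ j, sumF n (N j) = 1 := by
    intro j
    rw [hN]
    by_cases h : v j = 0
    · simp only [h, if_true, _root_.map_smul, smul_eq_mul]
      exact inv_mul_cancel₀ (ne_of_gt (hφpos j0 h0))
    · simp only [h, if_false, _root_.map_smul, smul_eq_mul]
      exact inv_mul_cancel₀ (ne_of_gt (hφpos j h))
  have hNspan : ∀ j, N j ∈ span ℝ (Set.range v) := by
    intro j
    rw [hN]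
    by_cases h : v j = 0
    · simp only [h, if_true]
      exact smul_mem _ _ (subset_span ⟨j0, rfl⟩)
    · simp only [h, if_false]
      exact smul_mem _ _ (subset_span ⟨j, rfl⟩)
  -- the difference space is at most one-dimensional
  have hk := finrank_inf_ker v h0 (ne_of_gt (hφpos j0 h0))
  have hW1 : finrank ℝ ↥(span ℝ (Set.range v) ⊓ LinearMap.ker (sumF n)) ≤ 1 := by omega
  obtain ⟨d, hd⟩ :=
    (Submodule.finrank_le_one_iff_isPrincipal _).1 hW1
  have hmem : ∀ j, N j - N j0 ∈ span ℝ (Set.range v) ⊓ LinearMap.ker (sumF n) := by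
    intro j
    refine Submodule.mem_inf.2 ⟨sub_mem (hNspan j) (hNspan j0), ?_⟩
    simp [LinearMap.mem_ker, map_sub, hNsum]
  have hex : ∀ j, ∃ t : ℝ, N j - N j0 = t • d := by
    intro j
    have := hmem j
    rw [hd] at this
    rcases Submodule.mem_span_singleton.1 this with ⟨t, ht⟩
    exact ⟨t, ht.symm⟩
  choose t ht using hex
  have hNt : ∀ j, N j = N j0 + t j • d := by
    intro j
    have := ht j
    rw [sub_eq_iff_eq_add] at this
    rw [this]; abel
  obtain ⟨j1, -, hj1⟩ := Finset.exists_min_image Finset.univ t ⟨j0, Finset.mem_univ j0⟩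
  obtain ⟨j2, -, hj2⟩ := Finset.exists_max_image Finset.univ t ⟨j0, Finset.mem_univ j0⟩
  have hj1' : ∀ j, t j1 ≤ t j := fun j => hj1 j (Finset.mem_univ j)
  have hj2' : ∀ j, t j ≤ t j2 := fun j => hj2 j (Finset.mem_univ j)
  by_cases hcase : t j1 = t j2
  · -- all normalized columns coincide
    have hts : ∀ j, t j = t j1 := fun j => le_antisymm (hcase ▸ hj2' j) (hj1' j)
    have hNj : ∀ j, N j = N j1 := by
      intro j
      rw [hNt j, hNt j1, hts j]
    refine ⟨N j1, 0, φ, 0, hNnn j1, fun i => le_rfl, hφnn, fun j => le_rfl, ?_⟩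
    intro j
    rw [hvN j, hNj j]
    simp
  · have hlt : t j1 < t j2 := lt_of_le_of_ne (hj1' j2) hcase
    have hden : (0:ℝ) < t j2 - t j1 := sub_pos.2 hlt
    set lam : Fin m → ℝ := fun j => (t j2 - t j) / (t j2 - t j1) with hlam
    have hlam0 : ∀ j, 0 ≤ lam j := fun j =>
      div_nonneg (sub_nonneg.2 (hj2' j)) hden.le
    have hlam1 : ∀ j, lam j ≤ 1 := fun j =>
      (div_le_one hden).2 (by linarith [hj1' j])
    have hNdecomp : ∀ j, N j = lam j • N j1 + (1 - lam j) • N j2 := by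
      intro j
      rw [hNt j, hNt j1, hNt j2]
      funext i
      simp only [hlam, Pi.add_apply, Pi.smul_apply, smul_eq_mul]
      field_simp
      ring
    refine ⟨N j1, N j2, fun j => φ j * lam j, fun j => φ j * (1 - lam j),
      hNnn j1, hNnn j2, fun j => mul_nonneg (hφnn j) (hlam0 j),
      fun j => mul_nonneg (hφnn j) (by linarith [hlam1 j]), ?_⟩
    intro j
    rw [hvN j, hNdecomp j]
    rw [smul_add, smul_smul, smul_smul]

lemma nnRank_le_of_decomp {n m k : ℕ} (P : Matrix (Fin n) (Fin m) ℝ)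
    (c : Fin k → Fin n → ℝ) (r : Fin k → Fin m → ℝ)
    (hc : ∀ h i, 0 ≤ c h i) (hr : ∀ h j, 0 ≤ r h j)
    (hP : P = ∑ h, Matrix.vecMulVec (c h) (r h)) : nnRank P ≤ k :=
  Nat.sInf_le ⟨c, r, hc, hr, hP⟩

lemma width_decomp {n m : ℕ} (P : Matrix (Fin n) (Fin m) ℝ) :
    P = ∑ h : Fin m, Matrix.vecMulVec (fun i => P i h) (fun j => if h = j then 1 else 0) := by
  ext i j
  simp only [Matrix.sum_apply, Matrix.vecMulVec_apply, mul_ite, mul_one, mul_zero]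
  simp

lemma nnRank_le_width {n m : ℕ} (P : Matrix (Fin n) (Fin m) ℝ) (hP : ∀ i j, 0 ≤ P i j) :
    nnRank P ≤ m :=
  nnRank_le_of_decomp P _ _ (fun h i => hP i h)
    (fun h j => by by_cases hij : h = j <;> simp [hij]) (width_decomp P)

lemma nnRank_le_height {n m : ℕ} (P : Matrix (Fin n) (Fin m) ℝ) (hP : ∀ i j, 0 ≤ P i j) :
    nnRank P ≤ n := by
  refine nnRank_le_of_decomp P (fun h i => if h = i then 1 else 0) (fun h j => P h j)
    (fun h i => by by_cases hij : h = i <;> simp [hij]) (fun h j => hP h j) ?_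
  ext i j
  simp only [Matrix.sum_apply, Matrix.vecMulVec_apply, ite_mul, one_mul, zero_mul]
  simp

lemma rank_le_of_decomp {n m k : ℕ} (P : Matrix (Fin n) (Fin m) ℝ)
    (c : Fin k → Fin n → ℝ) (r : Fin k → Fin m → ℝ)
    (hPr : P = ∑ h, Matrix.vecMulVec (c h) (r h)) : P.rank ≤ k := by
  rw [Matrix.rank_eq_finrank_span_cols]
  have hsub : Set.range Pᵀ ⊆ ↑(span ℝ (Set.range c)) := by
    rintro x ⟨j, rfl⟩
    have hcol : Pᵀ j = ∑ h, r h j • c h := by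
      funext i
      rw [Matrix.transpose_apply, hPr]
      simp [Matrix.sum_apply, Matrix.vecMulVec_apply, mul_comm]
    rw [hcol]
    exact Submodule.sum_mem _ fun h _ =>
      Submodule.smul_mem _ _ (Submodule.subset_span ⟨h, rfl⟩)
  calc Module.finrank ℝ ↥(span ℝ (Set.range Pᵀ))
      ≤ Module.finrank ℝ ↥(span ℝ (Set.range c)) :=
        Submodule.finrank_mono (Submodule.span_le.2 hsub)
    _ ≤ Fintype.card (Fin k) := finrank_range_le_card c
    _ = k := Fintype.card_fin _

lemma rank_le_nnRank {n m : ℕ} (P : Matrix (Fin n) (Fin m) ℝ) (hP : ∀ i j, 0 ≤ P i j) :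
    P.rank ≤ nnRank P := by
  have hne : {k : ℕ | ∃ (c : Fin k → Fin n → ℝ) (r : Fin k → Fin m → ℝ),
      (∀ h i, 0 ≤ c h i) ∧ (∀ h j, 0 ≤ r h j) ∧
      P = ∑ h, Matrix.vecMulVec (c h) (r h)}.Nonempty :=
    ⟨m, fun h i => P i h, fun h j => if h = j then 1 else 0,
      fun h i => hP i h, fun h j => by by_cases hij : h = j <;> simp [hij], width_decomp P⟩
  obtain ⟨c, r, -, -, hPr⟩ := Nat.sInf_mem hne
  exact rank_le_of_decomp P c r hPr

end NNRankAux

open NNRankAux Submodule Module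

theorem nnRank_eq_rank_of_small {n m : ℕ} (P : Matrix (Fin n) (Fin m) ℝ)
    (hP : ∀ i j, 0 ≤ P i j) (hsize : min n m ≤ 3) :
    nnRank P = P.rank := by
  classical
  refine le_antisymm ?_ (rank_le_nnRank P hP)
  set v : Fin m → Fin n → ℝ := fun j i => P i j with hv
  have hvnn : ∀ j i, 0 ≤ v j i := fun j i => hP i j
  have hrank : P.rank = finrank ℝ ↥(span ℝ (Set.range v)) :=
    Matrix.rank_eq_finrank_span_cols P
  by_cases h2 : P.rank ≤ 2
  · by_cases h1 : P.rank ≤ 1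
    · by_cases h00 : P.rank = 0
      · -- P = 0
        have hbot : span ℝ (Set.range v) = ⊥ :=
          Submodule.finrank_eq_zero.1 (by rw [← hrank]; exact h00)
        have hP0 : P = 0 := by
          ext i j
          have : v j ∈ span ℝ (Set.range v) := subset_span ⟨j, rfl⟩
          rw [hbot, Submodule.mem_bot] at this
          have := congrFun this i
          simpa [hv] using this
        rw [h00]
        refine nnRank_le_of_decomp (k := 0) P (fun h => (0 : Fin n → ℝ))
          (fun h => (0 : Fin m → ℝ)) (fun h i => le_rfl) (fun h j => le_rfl) ?_
        rw [hP0]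
        simp
      · -- rank one
        obtain ⟨u, a, hu, ha, hrep⟩ := cone_rep1 v hvnn (by rw [← hrank]; exact h1)
        have hle : nnRank P ≤ 1 := by
          refine nnRank_le_of_decomp (k := 1) P (fun _ => u) (fun _ => a)
            (fun _ => hu) (fun _ => ha) ?_
          ext i j
          have hvij : P i j = a j * u i := by
            have h := congrFun (hrep j) i
            simpa [smul_eq_mul] using h
          simp only [Matrix.sum_apply, Matrix.vecMulVec_apply, Fin.sum_univ_one]
          rw [hvij]; ring
        omega
    · -- rank two
      obtain ⟨u, w, a, b, hu, hw, ha, hb, hrep⟩ := cone_rep2 v hvnn (by rw [← hrank]; exact h2)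
      have hle : nnRank P ≤ 2 := by
        refine nnRank_le_of_decomp (k := 2) P ![u, w] ![a, b] ?_ ?_ ?_
        · intro h i; fin_cases h
          · exact hu i
          · exact hw i
        · intro h j; fin_cases h
          · exact ha j
          · exact hb j
        · ext i j
          have hvij : P i j = a j * u i + b j * w i := by
            have h := congrFun (hrep j) i
            simpa [smul_eq_mul] using h
          simp only [Matrix.sum_apply, Matrix.vecMulVec_apply, Fin.sum_univ_two,
            Matrix.cons_val_zero, Matrix.cons_val_one, Matrix.head_cons]
          rw [hvij]; ring
      omega
  · -- rank three
    have hn : P.rank ≤ n := Matrix.rank_le_height P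
    have hm : P.rank ≤ m := Matrix.rank_le_width P
    have h3 : P.rank = 3 := by omega
    have : nnRank P ≤ min n m :=
      le_min (nnRank_le_height P hP) (nnRank_le_width P hP)
    omega
end

section
/- Let P_ε = (1/4)·[[2,0,2,1−ε],[0,2,0,1+ε],[0,0,2,1+ε],[2,2,0,1−ε]]. Then rank(P_ε) = 3 for all real ε, rk₊(P₀) = 3, and rk₊(P_ε) = 4 for all sufficiently small ε > 0. -/
open Matrix BigOperators Filter Topology

lemma rank_eq_three (ε : ℝ) :
    ((1/4 : ℝ) • !![(2:ℝ),0,2,1-ε; 0,2,0,1+ε; 0,0,2,1+ε; 2,2,0,1-ε]).rank = 3 := by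
  set M : Matrix (Fin 4) (Fin 4) ℝ :=
    (1/4 : ℝ) • !![(2:ℝ),0,2,1-ε; 0,2,0,1+ε; 0,0,2,1+ε; 2,2,0,1-ε] with hM
  apply le_antisymm
  · have hfac : M = (!![1,0,0;0,1,0;0,0,1;1,1,-1] : Matrix (Fin 4) (Fin 3) ℝ) *
        ((1/4 : ℝ) • !![(2:ℝ),0,2,1-ε; 0,2,0,1+ε; 0,0,2,1+ε] : Matrix (Fin 3) (Fin 4) ℝ) := by
      ext i j
      fin_cases i <;> fin_cases j <;>
        simp [hM, Matrix.mul_apply, Fin.sum_univ_three, Matrix.vecHead, Matrix.vecTail] <;> ring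
    rw [hfac]
    exact (Matrix.rank_mul_le_right _ _).trans
      (by simpa using Matrix.rank_le_card_height ((1/4 : ℝ) • !![(2:ℝ),0,2,1-ε; 0,2,0,1+ε; 0,0,2,1+ε]))
  · have key : (!![(1:ℝ)/2,0,1/2;0,1/2,0;0,0,1/2] : Matrix (Fin 3) (Fin 3) ℝ) =
        (!![1,0,0,0;0,1,0,0;0,0,1,0] : Matrix (Fin 3) (Fin 4) ℝ) * M *
        (!![1,0,0;0,1,0;0,0,1;0,0,0] : Matrix (Fin 4) (Fin 3) ℝ) := by
      ext i j
      fin_cases i <;> fin_cases j <;>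
        simp [hM, Matrix.mul_apply, Fin.sum_univ_four, Fin.sum_univ_three, Matrix.vecHead, Matrix.vecTail] <;> norm_num
    have h3 : (!![(1:ℝ)/2,0,1/2;0,1/2,0;0,0,1/2] : Matrix (Fin 3) (Fin 3) ℝ).rank = 3 := by
      have hu : IsUnit (!![(1:ℝ)/2,0,1/2;0,1/2,0;0,0,1/2] : Matrix (Fin 3) (Fin 3) ℝ) := by
        rw [Matrix.isUnit_iff_isUnit_det]
        rw [Matrix.det_fin_three]; simp [Matrix.vecHead, Matrix.vecTail]
      simpa using Matrix.rank_of_isUnit _ hu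
    calc (3 : ℕ) = (!![(1:ℝ)/2,0,1/2;0,1/2,0;0,0,1/2] : Matrix (Fin 3) (Fin 3) ℝ).rank := h3.symm
      _ ≤ ((!![1,0,0,0;0,1,0,0;0,0,1,0] : Matrix (Fin 3) (Fin 4) ℝ) * M).rank := by
          rw [key]; exact Matrix.rank_mul_le_left _ _
      _ ≤ M.rank := Matrix.rank_mul_le_right _ _


private lemma exists_pos_term {k : ℕ} (f : Fin k → ℝ) (h0 : ∀ h, 0 ≤ f h)
    (hs : 0 < ∑ h, f h) : ∃ h, 0 < f h := by
  by_contra hcon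
  push_neg at hcon
  have hz : ∀ h, f h = 0 := fun h => le_antisymm (hcon h) (h0 h)
  rw [Finset.sum_eq_zero (fun h _ => hz h)] at hs
  linarith

private lemma all_zero_of_sum {k : ℕ} (f : Fin k → ℝ) (h0 : ∀ h, 0 ≤ f h)
    (hs : ∑ h, f h = 0) : ∀ h, f h = 0 := fun h =>
  (Finset.sum_eq_zero_iff_of_nonneg (fun i _ => h0 i)).mp hs h (Finset.mem_univ h)

private lemma pos_factors {a b : ℝ} (ha : 0 ≤ a) (hb : 0 ≤ b) (h : 0 < a * b) :
    0 < a ∧ 0 < b := by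
  constructor <;> nlinarith

lemma no_three (ε : ℝ) (hε : 0 < ε) (k : ℕ) (hk : k ≤ 3)
    (c : Fin k → Fin 4 → ℝ) (r : Fin k → Fin 4 → ℝ)
    (hc : ∀ h i, 0 ≤ c h i) (hr : ∀ h j, 0 ≤ r h j)
    (hP : ((1/4 : ℝ) • !![(2:ℝ),0,2,1-ε; 0,2,0,1+ε; 0,0,2,1+ε; 2,2,0,1-ε]) =
      ∑ h, Matrix.vecMulVec (c h) (r h)) : False := by
  have hS : ∀ i j, ∑ h, c h i * r h j =
      ((1/4 : ℝ) • !![(2:ℝ),0,2,1-ε; 0,2,0,1+ε; 0,0,2,1+ε; 2,2,0,1-ε]) i j := by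
    intro i j
    rw [hP, Matrix.sum_apply]
    simp [Matrix.vecMulVec_apply]
  -- pick A, B, C
  obtain ⟨A, hA⟩ : ∃ h, 0 < c h 1 * r h 1 := by
    refine exists_pos_term _ (fun h => mul_nonneg (hc h 1) (hr h 1)) ?_
    have := hS 1 1; simp [Matrix.vecHead, Matrix.vecTail] at this; rw [this]; norm_num
  obtain ⟨B, hB⟩ : ∃ h, 0 < c h 2 * r h 2 := by
    refine exists_pos_term _ (fun h => mul_nonneg (hc h 2) (hr h 2)) ?_
    have := hS 2 2; simp [Matrix.vecHead, Matrix.vecTail] at this; rw [this]; norm_num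
  obtain ⟨C, hC⟩ : ∃ h, 0 < c h 0 * r h 0 := by
    refine exists_pos_term _ (fun h => mul_nonneg (hc h 0) (hr h 0)) ?_
    have := hS 0 0; simp [Matrix.vecHead, Matrix.vecTail] at this; rw [this]; norm_num
  obtain ⟨hcA1, hrA1⟩ := pos_factors (hc A 1) (hr A 1) hA
  obtain ⟨hcB2, hrB2⟩ := pos_factors (hc B 2) (hr B 2) hB
  obtain ⟨hcC0, hrC0⟩ := pos_factors (hc C 0) (hr C 0) hC
  -- zero entries
  have z10 : ∀ h, c h 1 * r h 0 = 0 := by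
    refine all_zero_of_sum _ (fun h => mul_nonneg (hc h 1) (hr h 0)) ?_
    have := hS 1 0; simp [Matrix.vecHead, Matrix.vecTail] at this; rw [this]
  have z20 : ∀ h, c h 2 * r h 0 = 0 := by
    refine all_zero_of_sum _ (fun h => mul_nonneg (hc h 2) (hr h 0)) ?_
    have := hS 2 0; simp [Matrix.vecHead, Matrix.vecTail] at this; rw [this]
  have z21 : ∀ h, c h 2 * r h 1 = 0 := by
    refine all_zero_of_sum _ (fun h => mul_nonneg (hc h 2) (hr h 1)) ?_
    have := hS 2 1; simp [Matrix.vecHead, Matrix.vecTail] at this; rw [this]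
  have z01 : ∀ h, c h 0 * r h 1 = 0 := by
    refine all_zero_of_sum _ (fun h => mul_nonneg (hc h 0) (hr h 1)) ?_
    have := hS 0 1; simp [Matrix.vecHead, Matrix.vecTail] at this; rw [this]
  have z32 : ∀ h, c h 3 * r h 2 = 0 := by
    refine all_zero_of_sum _ (fun h => mul_nonneg (hc h 3) (hr h 2)) ?_
    have := hS 3 2; simp [Matrix.vecHead, Matrix.vecTail] at this; rw [this]
  -- consequences
  have hrA0 : r A 0 = 0 := (mul_eq_zero.mp (z10 A)).resolve_left (ne_of_gt hcA1)
  have hrB0 : r B 0 = 0 := (mul_eq_zero.mp (z20 B)).resolve_left (ne_of_gt hcB2)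
  have hrB1 : r B 1 = 0 := (mul_eq_zero.mp (z21 B)).resolve_left (ne_of_gt hcB2)
  have hcC2 : c C 2 = 0 := (mul_eq_zero.mp (z20 C)).resolve_right (ne_of_gt hrC0)
  have hcA2 : c A 2 = 0 := (mul_eq_zero.mp (z21 A)).resolve_right (ne_of_gt hrA1)
  have hcA0 : c A 0 = 0 := (mul_eq_zero.mp (z01 A)).resolve_right (ne_of_gt hrA1)
  have hcB3 : c B 3 = 0 := (mul_eq_zero.mp (z32 B)).resolve_right (ne_of_gt hrB2)
  -- distinctness
  have hAB : A ≠ B := fun h => by rw [h] at hrA1; exact (ne_of_gt hrA1) hrB1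
  have hAC : A ≠ C := fun h => by rw [h] at hrA0; exact (ne_of_gt hrC0) hrA0
  have hBC : B ≠ C := fun h => by rw [h] at hrB0; exact (ne_of_gt hrC0) hrB0
  -- univ = {A, B, C}
  have hcard : ({A, B, C} : Finset (Fin k)).card = 3 :=
    Finset.card_eq_three.mpr ⟨A, B, C, hAB, hAC, hBC, rfl⟩
  have hk3 : 3 ≤ k := by
    have := Finset.card_le_univ ({A, B, C} : Finset (Fin k))
    simpa [hcard] using this
  have huniv : (Finset.univ : Finset (Fin k)) = {A, B, C} :=
    (Finset.eq_univ_of_card _ (by simp [hcard]; omega)).symm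
  have expand : ∀ f : Fin k → ℝ, ∑ h, f h = f A + f B + f C := by
    intro f
    rw [huniv, Finset.sum_insert (by simp [hAB, hAC]),
      Finset.sum_insert (by simpa using hBC), Finset.sum_singleton]
    ring
  have E : ∀ i j, c A i * r A j + c B i * r B j + c C i * r C j =
      ((1/4 : ℝ) • !![(2:ℝ),0,2,1-ε; 0,2,0,1+ε; 0,0,2,1+ε; 2,2,0,1-ε]) i j :=
    fun i j => (expand _).symm.trans (hS i j)
  have E30 := E 3 0; simp [Matrix.vecHead, Matrix.vecTail] at E30
  have E32 := E 3 2; simp [Matrix.vecHead, Matrix.vecTail] at E32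
  have E02 := E 0 2; simp [Matrix.vecHead, Matrix.vecTail] at E02
  have E22 := E 2 2; simp [Matrix.vecHead, Matrix.vecTail] at E22
  have E23 := E 2 3; simp [Matrix.vecHead, Matrix.vecTail] at E23
  have E03 := E 0 3; simp [Matrix.vecHead, Matrix.vecTail] at E03
  -- c C 3 > 0
  have hcC3 : 0 < c C 3 := by
    rw [hrA0, hrB0] at E30
    norm_num at E30
    by_contra hcon
    push_neg at hcon
    nlinarith [mul_nonpos_of_nonpos_of_nonneg hcon (hr C 0)]
  have hrC2 : r C 2 = 0 := (mul_eq_zero.mp (z32 C)).resolve_left (ne_of_gt hcC3)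
  -- c B 0 = c B 2
  have hcB02 : c B 0 = c B 2 := by
    rw [hcA0, hrC2] at E02
    rw [hcA2, hcC2] at E22
    norm_num at E02 E22
    exact mul_right_cancel₀ (ne_of_gt hrB2) (E02.trans E22.symm)
  -- final contradiction
  rw [hcA2, hcC2] at E23
  rw [hcA0] at E03
  norm_num at E23 E03
  rw [hcB02] at E03
  have hnn : 0 ≤ c C 0 * r C 3 := mul_nonneg (hc C 0) (hr C 3)
  linarith


private lemma rank_sum_dyads_le {k n m : ℕ} (c : Fin k → Fin n → ℝ) (r : Fin k → Fin m → ℝ) :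
    (∑ h, Matrix.vecMulVec (c h) (r h)).rank ≤ k := by
  have hfac : ∑ h, Matrix.vecMulVec (c h) (r h) =
      (Matrix.of fun i h => c h i) * (Matrix.of fun h j => r h j) := by
    ext i j
    simp [Matrix.mul_apply, Matrix.vecMulVec_apply, Matrix.sum_apply]
  rw [hfac]
  exact (Matrix.rank_mul_le_right _ _).trans
    (by simpa using Matrix.rank_le_card_height (Matrix.of fun h j => r h j))



theorem perturbed_example :
    (∀ ε : ℝ, ((1/4 : ℝ) • !![(2:ℝ),0,2,1-ε; 0,2,0,1+ε; 0,0,2,1+ε; 2,2,0,1-ε]).rank = 3) ∧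
    nnRank ((1/4 : ℝ) • !![(2:ℝ),0,2,1-(0:ℝ); 0,2,0,1+0; 0,0,2,1+0; 2,2,0,1-0]) = 3 ∧
    ∃ ε₀ > (0 : ℝ), ∀ ε : ℝ, 0 < ε → ε < ε₀ →
      nnRank ((1/4 : ℝ) • !![(2:ℝ),0,2,1-ε; 0,2,0,1+ε; 0,0,2,1+ε; 2,2,0,1-ε]) = 4 := by
  refine ⟨rank_eq_three, ?_, ⟨1/2, by norm_num, ?_⟩⟩
  · -- nnRank at ε = 0 equals 3
    have hmem : (3 : ℕ) ∈ {k : ℕ | ∃ (c : Fin k → Fin 4 → ℝ) (r : Fin k → Fin 4 → ℝ),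
        (∀ h i, 0 ≤ c h i) ∧ (∀ h j, 0 ≤ r h j) ∧
        ((1/4 : ℝ) • !![(2:ℝ),0,2,1-(0:ℝ); 0,2,0,1+0; 0,0,2,1+0; 2,2,0,1-0]) =
          ∑ h, Matrix.vecMulVec (c h) (r h)} := by
      refine ⟨![![1/2,0,0,1/2], ![0,1/2,0,1/2], ![1/2,0,1/2,0]],
        ![![1,0,0,0], ![0,1,0,1/2], ![0,0,1,1/2]], ?_, ?_, ?_⟩
      · intro h i; fin_cases h <;> fin_cases i <;> norm_num
      · intro h j; fin_cases h <;> fin_cases j <;> norm_num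
      · ext i j
        rw [Matrix.sum_apply]
        fin_cases i <;> fin_cases j <;>
          simp [Fin.sum_univ_three, Matrix.vecMulVec_apply, Matrix.vecHead, Matrix.vecTail] <;>
          norm_num
    refine le_antisymm (Nat.sInf_le hmem) (le_csInf ⟨3, hmem⟩ ?_)
    rintro k ⟨c, r, hc, hr, hP⟩
    have h1 : ((1/4 : ℝ) • !![(2:ℝ),0,2,1-(0:ℝ); 0,2,0,1+0; 0,0,2,1+0; 2,2,0,1-0]).rank ≤ k := by
      rw [hP]; exact rank_sum_dyads_le c r
    have h2 := rank_eq_three 0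
    omega
  · -- nnRank = 4 for 0 < ε < 1/2
    intro ε hε hε'
    have hmem : (4 : ℕ) ∈ {k : ℕ | ∃ (c : Fin k → Fin 4 → ℝ) (r : Fin k → Fin 4 → ℝ),
        (∀ h i, 0 ≤ c h i) ∧ (∀ h j, 0 ≤ r h j) ∧
        ((1/4 : ℝ) • !![(2:ℝ),0,2,1-ε; 0,2,0,1+ε; 0,0,2,1+ε; 2,2,0,1-ε]) =
          ∑ h, Matrix.vecMulVec (c h) (r h)} := by
      refine ⟨fun h i => if i = h then 1 else 0,
        fun h j => ((1/4 : ℝ) • !![(2:ℝ),0,2,1-ε; 0,2,0,1+ε; 0,0,2,1+ε; 2,2,0,1-ε]) h j,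
        ?_, ?_, ?_⟩
      · intro h i; dsimp only; split <;> norm_num
      · intro h j
        fin_cases h <;> fin_cases j <;>
          simp [Matrix.vecHead, Matrix.vecTail] <;> linarith
      · ext i j
        rw [Matrix.sum_apply]
        simp [Matrix.vecMulVec_apply, ite_mul]
    refine le_antisymm (Nat.sInf_le hmem) (le_csInf ⟨4, hmem⟩ ?_)
    rintro k ⟨c, r, hc, hr, hP⟩
    by_contra hcon
    push_neg at hcon
    exact no_three ε hε k (by omega) c r hc hr hP
end
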